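/- arXiv:2507.09707 — 4 statements merged into one kernel-verified Lean document; each statement's English description precedes it below -/
import Mathlib

section
/- Let F and H be finite-dimensional vector spaces with dim F = dim H, and let Φ: O_F → O_H be a C² diffeomorphism between open sets O_F ⊂ F and O_H ⊂ H. Then for any point z₀ ∈ O_F there exists a C² diffeomorphism Φ̃: F → H (defined on all of F, onto all of H) that coincides with Φ in a neighbourhood of z₀. -/
open Set Metric
set_option maxHeartbeats 1600000 in

/-- **Extension of a local diffeomorphism to a global one.** Let `F` and `H` be
finite-dimensional vector spaces with `dim F = dim H`, and let `Φ : O_F → O_H` be a `C²`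
diffeomorphism between open sets `O_F ⊂ F` and `O_H ⊂ H`.  Then for any point `z₀ ∈ O_F` there
exists a `C²` diffeomorphism `Φ̃ : F → H`, defined on all of `F` and onto all of `H`, that
coincides with `Φ` in a neighbourhood of `z₀`. -/
theorem extend_local_C2_diffeo
    {F H : Type*}
    [NormedAddCommGroup F] [NormedSpace ℝ F] [FiniteDimensional ℝ F]
    [NormedAddCommGroup H] [NormedSpace ℝ H] [FiniteDimensional ℝ H]
    (hdim : Module.finrank ℝ F = Module.finrank ℝ H)
    (OF : Set F) (OH : Set H) (hOF : IsOpen OF) (hOH : IsOpen OH)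
    (Φ : F → H) (Ψ : H → F)
    (hbij : Set.BijOn Φ OF OH)
    (hΦ : ContDiffOn ℝ 2 Φ OF) (hΨ : ContDiffOn ℝ 2 Ψ OH)
    (hinv : ∀ z ∈ OF, Ψ (Φ z) = z) (hinv' : ∀ x ∈ OH, Φ (Ψ x) = x)
    (z₀ : F) (hz₀ : z₀ ∈ OF) :
    ∃ Φt : F → H, Function.Bijective Φt ∧ ContDiff ℝ 2 Φt ∧
      ContDiff ℝ 2 (Function.invFun Φt) ∧ ∀ᶠ z in nhds z₀, Φt z = Φ z := by
  rcases subsingleton_or_nontrivial F with hFsub | hFnt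
  · -- trivial case: `F` (hence `H`) is a point
    have h0 : Module.finrank ℝ H = 0 := by
      rw [← hdim]; exact Module.finrank_zero_of_subsingleton
    have hHsub : Subsingleton H := Module.finrank_zero_iff.mp h0
    refine ⟨fun _ => Φ z₀, ⟨fun a b _ => Subsingleton.elim a b,
      fun x => ⟨z₀, Subsingleton.elim _ _⟩⟩, contDiff_const, ?_,
      Filter.Eventually.of_forall fun z => by rw [Subsingleton.elim z z₀]⟩
    have h : Function.invFun (fun _ : F => Φ z₀) = fun _ => z₀ :=
      funext fun x => Subsingleton.elim _ _
    rw [h]; exact contDiff_const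
  -- main case
  have h12 : (1 : WithTop ℕ∞) ≤ 2 := one_le_two
  have hΦd : ∀ z ∈ OF, DifferentiableAt ℝ Φ z := fun z hz =>
    ((hΦ.differentiableOn two_ne_zero) z hz).differentiableAt (hOF.mem_nhds hz)
  have hΨd : ∀ x ∈ OH, DifferentiableAt ℝ Ψ x := fun x hx =>
    ((hΨ.differentiableOn two_ne_zero) x hx).differentiableAt (hOH.mem_nhds hx)
  have hΦz₀ : Φ z₀ ∈ OH := hbij.mapsTo hz₀
  set A' : F →L[ℝ] H := fderiv ℝ Φ z₀ with hA'def
  set B' : H →L[ℝ] F := fderiv ℝ Ψ (Φ z₀) with hB'def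
  have hBA : B'.comp A' = ContinuousLinearMap.id ℝ F := by
    have h1 : (Ψ ∘ Φ) =ᶠ[nhds z₀] id :=
      Filter.eventuallyEq_of_mem (hOF.mem_nhds hz₀) fun z hz => hinv z hz
    have h2 : fderiv ℝ (Ψ ∘ Φ) z₀ = fderiv ℝ (id : F → F) z₀ := h1.fderiv_eq
    rwa [fderiv_comp (x := z₀) (hΨd _ hΦz₀) (hΦd _ hz₀), fderiv_id] at h2
  have hAB : A'.comp B' = ContinuousLinearMap.id ℝ H := by
    have h1 : (Φ ∘ Ψ) =ᶠ[nhds (Φ z₀)] id :=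
      Filter.eventuallyEq_of_mem (hOH.mem_nhds hΦz₀) fun x hx => hinv' x hx
    have h2 : fderiv ℝ (Φ ∘ Ψ) (Φ z₀) = fderiv ℝ (id : H → H) (Φ z₀) := h1.fderiv_eq
    rw [fderiv_comp (x := Φ z₀) (by rw [hinv z₀ hz₀]; exact hΦd _ hz₀) (hΨd _ hΦz₀),
      fderiv_id, hinv z₀ hz₀] at h2
    exact h2
  let eL : F ≃ₗ[ℝ] H := LinearEquiv.ofLinear (A' : F →ₗ[ℝ] H) (B' : H →ₗ[ℝ] F)
    (LinearMap.ext fun v => by simpa using DFunLike.congr_fun hAB v)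
    (LinearMap.ext fun v => by simpa using DFunLike.congr_fun hBA v)
  let A : F ≃L[ℝ] H := eL.toContinuousLinearEquiv
  have hAapp : ∀ v, A v = A' v := fun v => rfl
  set N : ℝ := ‖(A.symm : H →L[ℝ] F)‖ with hNdef
  have hN : 0 < N := by
    rw [hNdef, norm_pos_iff]
    intro h
    obtain ⟨v, hv⟩ := exists_ne (0 : F)
    apply hv
    have h1 : A.symm (A v) = v := A.symm_apply_apply v
    rw [← h1, ← ContinuousLinearEquiv.coe_coe, h]; rfl
  have hNineq : ∀ v : F, ‖v‖ ≤ N * ‖A' v‖ := fun v => by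
    calc ‖v‖ = ‖A.symm (A v)‖ := by rw [A.symm_apply_apply]
    _ ≤ N * ‖A v‖ := (A.symm : H →L[ℝ] F).le_opNorm (A v)
    _ = N * ‖A' v‖ := by rw [hAapp]
  -- bump function
  let θ : ContDiffBump (0 : F) := ⟨1, 2, one_pos, one_lt_two⟩
  have hθc2 : ContDiff ℝ 2 (θ : F → ℝ) := θ.contDiff
  obtain ⟨K, hK⟩ : ∃ K, ∀ y : F, ‖fderiv ℝ θ y‖ ≤ K :=
    (θ.hasCompactSupport.fderiv (𝕜 := ℝ)).exists_bound_of_continuous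
      (hθc2.continuous_fderiv two_ne_zero)
  have hK0 : (0:ℝ) ≤ K := le_trans (norm_nonneg _) (hK 0)
  have h1K : (0:ℝ) < 1 + 2 * K := by linarith
  -- constants
  set δ : ℝ := N⁻¹ / (2 * (1 + 2 * K)) with hδdef
  have hδ : 0 < δ := div_pos (inv_pos.mpr hN) (by linarith)
  set c : ℝ := δ * (1 + 2 * K) with hcdef
  have hc0 : 0 < c := mul_pos hδ h1K
  have hceq : c = N⁻¹ / 2 := by
    rw [hcdef, hδdef]; field_simp
  have hcN : c < N⁻¹ := by
    rw [hceq]; exact half_lt_self (inv_pos.mpr hN)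
  -- choice of ε
  have hcont : ContinuousAt (fderiv ℝ Φ) z₀ :=
    (hΦ.continuousOn_fderiv_of_isOpen hOF h12).continuousAt (hOF.mem_nhds hz₀)
  have hev : ∀ᶠ z in nhds z₀, ‖fderiv ℝ Φ z - A'‖ < δ := by
    have ht : Filter.Tendsto (fun z => ‖fderiv ℝ Φ z - A'‖) (nhds z₀) (nhds ‖A' - A'‖) :=
      ((hcont.sub continuousAt_const).norm)
    rw [sub_self, norm_zero] at ht
    exact ht.eventually (gt_mem_nhds hδ)
  obtain ⟨ru, hru, hballu⟩ :=
    Metric.mem_nhds_iff.mp (Filter.inter_mem (hOF.mem_nhds hz₀) hev)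
  set ε : ℝ := ru / 3 with hεdef
  have hε : 0 < ε := by positivity
  have hincl : closedBall z₀ (2 * ε) ⊆ ball z₀ ru := fun x hx => by
    rw [mem_closedBall] at hx; rw [mem_ball]
    rw [hεdef] at hx; linarith
  have hsub : closedBall z₀ (2 * ε) ⊆ OF := fun x hx => (hballu (hincl hx)).1
  have hder : ∀ z ∈ closedBall z₀ (2 * ε), ‖fderiv ℝ Φ z - A'‖ ≤ δ := fun z hz =>
    le_of_lt (hballu (hincl hz)).2
  -- the cut-off, the remainder, and the global map
  set θε : F → ℝ := fun z => θ (ε⁻¹ • (z - z₀)) with hθεdef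
  set rr : F → H := fun z => Φ z - Φ z₀ - A' (z - z₀) with hrrdef
  set g : F → H := fun z => θε z • rr z with hgdef
  set Φt : F → H := fun z => Φ z₀ + A' (z - z₀) + g z with hΦtdef
  have hnorm_smul : ∀ z : F, ‖ε⁻¹ • (z - z₀)‖ = ε⁻¹ * ‖z - z₀‖ := fun z => by
    rw [norm_smul, Real.norm_eq_abs, abs_of_pos (inv_pos.mpr hε)]
  have hθε1 : ∀ z ∈ closedBall z₀ ε, θε z = 1 := fun z hz => by
    apply θ.one_of_mem_closedBall
    rw [mem_closedBall, dist_zero_right, hnorm_smul]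
    rw [mem_closedBall, dist_eq_norm] at hz
    show ε⁻¹ * ‖z - z₀‖ ≤ 1
    calc ε⁻¹ * ‖z - z₀‖ ≤ ε⁻¹ * ε :=
      mul_le_mul_of_nonneg_left hz (inv_pos.mpr hε).le
    _ = 1 := inv_mul_cancel₀ hε.ne'
  have hθε0 : ∀ z ∉ closedBall z₀ (2 * ε), θε z = 0 := fun z hz => by
    apply θ.zero_of_le_dist
    rw [dist_zero_right, hnorm_smul]
    rw [mem_closedBall, not_le, dist_eq_norm] at hz
    show (2:ℝ) ≤ ε⁻¹ * ‖z - z₀‖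
    have h1 : ε⁻¹ * (2 * ε) ≤ ε⁻¹ * ‖z - z₀‖ :=
      mul_le_mul_of_nonneg_left hz.le (inv_pos.mpr hε).le
    have h2 : ε⁻¹ * (2 * ε) = 2 := by field_simp
    linarith
  have hθεle : ∀ z, |θε z| ≤ 1 := fun z => abs_le.mpr ⟨by linarith [θ.nonneg (x := ε⁻¹ • (z - z₀))], θ.le_one⟩
  have hθεsm : ContDiff ℝ 2 θε :=
    hθc2.comp ((contDiff_id.sub contDiff_const).const_smul ε⁻¹)
  have hθdiff : Differentiable ℝ (θ : F → ℝ) := hθc2.differentiable two_ne_zero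
  have hθεd : ∀ z, HasFDerivAt θε
      ((fderiv ℝ θ (ε⁻¹ • (z - z₀))).comp (ε⁻¹ • ContinuousLinearMap.id ℝ F)) z := fun z => by
    have hin : HasFDerivAt (fun z : F => ε⁻¹ • (z - z₀)) (ε⁻¹ • ContinuousLinearMap.id ℝ F) z :=
      ((hasFDerivAt_id z).sub_const z₀).const_smul ε⁻¹
    exact (hθdiff _).hasFDerivAt.comp z hin
  have hθεdb : ∀ z, ‖(fderiv ℝ θ (ε⁻¹ • (z - z₀))).comp (ε⁻¹ • ContinuousLinearMap.id ℝ F)‖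
      ≤ ε⁻¹ * K := fun z => by
    calc ‖(fderiv ℝ θ (ε⁻¹ • (z - z₀))).comp (ε⁻¹ • ContinuousLinearMap.id ℝ F)‖
        ≤ ‖fderiv ℝ θ (ε⁻¹ • (z - z₀))‖ * ‖ε⁻¹ • ContinuousLinearMap.id ℝ F‖ :=
          ContinuousLinearMap.opNorm_comp_le _ _
    _ ≤ K * (ε⁻¹ * 1) := by
        apply mul_le_mul (hK _) ?_ (norm_nonneg _) hK0
        calc ‖ε⁻¹ • ContinuousLinearMap.id ℝ F‖
            ≤ ‖ε⁻¹‖ * ‖ContinuousLinearMap.id ℝ F‖ := ContinuousLinearMap.opNorm_smul_le _ _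
        _ ≤ ε⁻¹ * 1 := by
            rw [Real.norm_eq_abs, abs_of_pos (inv_pos.mpr hε)]
            exact mul_le_mul_of_nonneg_left ContinuousLinearMap.norm_id_le (inv_pos.mpr hε).le
    _ = ε⁻¹ * K := by ring
  -- remainder facts
  have hrrz₀ : rr z₀ = 0 := by simp [hrrdef]
  have haff : ∀ x : F, HasFDerivAt (fun w => A' (w - z₀)) (A' : F →L[ℝ] H) x := fun x => by
    rw [show (fun w : F => A' (w - z₀)) = fun w => A' w - A' z₀ from
      funext fun w => by rw [map_sub]]
    exact A'.hasFDerivAt.sub_const (A' z₀)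
  have hrrd : ∀ z ∈ OF, HasFDerivAt rr (fderiv ℝ Φ z - A') z := fun z hz =>
    ((hΦd z hz).hasFDerivAt.sub_const (Φ z₀)).sub (haff z)
  have hrrb : ∀ z ∈ closedBall z₀ (2 * ε), ‖rr z‖ ≤ δ * (2 * ε) := fun z hz => by
    have hmvt := Convex.norm_image_sub_le_of_norm_fderiv_le (f := rr)
      (s := closedBall z₀ (2 * ε)) (C := δ)
      (fun x hx => (hrrd x (hsub hx)).differentiableAt)
      (fun x hx => by rw [(hrrd x (hsub hx)).fderiv]; exact hder x hx)
      (convex_closedBall _ _) (mem_closedBall_self (by positivity)) hz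
    rw [hrrz₀, sub_zero] at hmvt
    calc ‖rr z‖ ≤ δ * ‖z - z₀‖ := hmvt
    _ ≤ δ * (2 * ε) := by
        apply mul_le_mul_of_nonneg_left _ hδ.le
        rw [← dist_eq_norm]; exact mem_closedBall.mp hz
  -- smoothness of g
  have hrrsm : ContDiffOn ℝ 2 rr OF :=
    (hΦ.sub contDiffOn_const).sub
      ((A'.contDiff.comp (contDiff_id.sub contDiff_const)).contDiffOn)
  have hgOF : ContDiffOn ℝ 2 g OF := hθεsm.contDiffOn.smul hrrsm
  have hgsm : ContDiff ℝ 2 g := by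
    rw [← contDiffOn_univ]
    intro x _
    by_cases hx : x ∈ OF
    · exact ((hgOF.contDiffAt (hOF.mem_nhds hx)).contDiffWithinAt)
    · have hx' : x ∈ (closedBall z₀ (2 * ε))ᶜ := fun h => hx (hsub h)
      have hev0 : g =ᶠ[nhds x] fun _ => 0 :=
        Filter.eventuallyEq_of_mem (isClosed_closedBall.isOpen_compl.mem_nhds hx')
          fun w hw => by simp [hgdef, hθε0 w hw]
      exact ((contDiffAt_const (c := (0:H))).congr_of_eventuallyEq hev0).contDiffWithinAt
  have hgdiff : Differentiable ℝ g := hgsm.differentiable two_ne_zero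
  -- the key derivative bound for g
  have hgd : ∀ z, ‖fderiv ℝ g z‖ ≤ c := fun z => by
    by_cases hz : z ∈ closedBall z₀ (2 * ε)
    · have hzOF := hsub hz
      have hprod : HasFDerivAt g
          (θε z • (fderiv ℝ Φ z - A') +
            ((fderiv ℝ θ (ε⁻¹ • (z - z₀))).comp (ε⁻¹ • ContinuousLinearMap.id ℝ F)).smulRight
              (rr z)) z :=
        (hθεd z).smul (hrrd z hzOF)
      rw [hprod.fderiv]
      have hb1 : ‖θε z • (fderiv ℝ Φ z - A')‖ ≤ 1 * δ := by
        refine le_trans (ContinuousLinearMap.opNorm_smul_le _ _) ?_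
        rw [Real.norm_eq_abs]
        exact mul_le_mul (hθεle z) (hder z hz) (norm_nonneg _) zero_le_one
      have hb2 : ‖((fderiv ℝ θ (ε⁻¹ • (z - z₀))).comp
            (ε⁻¹ • ContinuousLinearMap.id ℝ F)).smulRight (rr z)‖
          ≤ (ε⁻¹ * K) * (δ * (2 * ε)) := by
        rw [ContinuousLinearMap.norm_smulRight_apply]
        exact mul_le_mul (hθεdb z) (hrrb z hz) (norm_nonneg _)
          (by positivity)
      have hεε : ε⁻¹ * ε = 1 := inv_mul_cancel₀ hε.ne'
      calc ‖_ + _‖ ≤ 1 * δ + (ε⁻¹ * K) * (δ * (2 * ε)) :=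
            le_trans (norm_add_le _ _) (add_le_add hb1 hb2)
      _ = c := by rw [hcdef]; nlinarith [hεε]
    · have hev0 : g =ᶠ[nhds z] fun _ => 0 :=
        Filter.eventuallyEq_of_mem (isClosed_closedBall.isOpen_compl.mem_nhds hz)
          fun w hw => by simp [hgdef, hθε0 w hw]
      rw [hev0.fderiv_eq, fderiv_fun_const]
      simp [hc0.le]
  -- Lipschitz bound and the global homeomorphism
  set cnn : NNReal := ⟨c, hc0.le⟩ with hcnndef
  have hglip : LipschitzWith cnn g :=
    lipschitzWith_of_nnnorm_fderiv_le hgdiff fun x => by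
      rw [← NNReal.coe_le_coe]
      exact hgd x
  have hΦtsub : (Φt - ⇑(A : F →L[ℝ] H)) = fun z => g z + (Φ z₀ - A' z₀) := by
    funext z
    have : (A : F →L[ℝ] H) z = A' z := hAapp z
    simp only [Pi.sub_apply, hΦtdef, this, map_sub]
    abel
  have happrox : ApproximatesLinearOn Φt (A : F →L[ℝ] H) univ cnn := by
    apply LipschitzOnWith.approximatesLinearOn
    rw [hΦtsub]
    have hglip' : LipschitzWith cnn fun z => g z + (Φ z₀ - A' z₀) := by
      intro x y
      simp only [edist_add_right]
      exact hglip x y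
    exact hglip'.lipschitzOnWith
  have hcnn : cnn < ‖((A.symm : H ≃L[ℝ] F) : H →L[ℝ] F)‖₊⁻¹ := by
    rw [← NNReal.coe_lt_coe, NNReal.coe_inv, coe_nnnorm]
    exact hcN
  let homeo := happrox.toHomeomorph Φt (Or.inr hcnn)
  have hhomeo : (homeo : F → H) = Φt := rfl
  have hbijt : Function.Bijective Φt := by
    rw [← hhomeo]; exact homeo.bijective
  have hΦtsm : ContDiff ℝ 2 Φt :=
    (contDiff_const.add (A'.contDiff.comp (contDiff_id.sub contDiff_const))).add hgsm
  -- derivative of Φt and its invertibility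
  have hΦtd : ∀ x, HasFDerivAt Φt (A' + fderiv ℝ g x) x := fun x =>
    ((haff x).const_add (Φ z₀)).add (hgdiff x).hasFDerivAt
  have hNc1 : N * c < 1 := by
    have := mul_lt_mul_of_pos_left hcN hN
    rwa [mul_inv_cancel₀ hN.ne'] at this
  have hinvert : ∀ x, ∃ E₁ : F ≃L[ℝ] H, (E₁ : F →L[ℝ] H) = A' + fderiv ℝ g x := fun x => by
    set B := fderiv ℝ g x with hBdef
    have hBle : ‖B‖ ≤ c := hgd x
    have hinj' : Function.Injective (A' + B) := by
      intro u v huv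
      by_contra hne
      have hpos : 0 < ‖u - v‖ := by
        rw [norm_pos_iff, sub_ne_zero]; exact hne
      have h0 : A' (u - v) + B (u - v) = 0 := by
        have h1 : (A' + B) u - (A' + B) v = 0 := by rw [huv, sub_self]
        simpa [map_sub, ContinuousLinearMap.add_apply, add_sub_add_comm] using h1
      have e1 : ‖A' (u - v)‖ = ‖B (u - v)‖ := by
        rw [eq_neg_of_add_eq_zero_left h0, norm_neg]
      have e2 : ‖u - v‖ ≤ N * (c * ‖u - v‖) := by
        refine le_trans (hNineq (u - v)) ?_
        rw [e1]
        exact mul_le_mul_of_nonneg_left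
          (le_trans (B.le_opNorm _) (mul_le_mul_of_nonneg_right hBle (norm_nonneg _))) hN.le
      nlinarith
    have hsurj' : Function.Surjective (A' + B) :=
      (LinearMap.injective_iff_surjective_of_finrank_eq_finrank hdim).mp hinj'
    exact ⟨(LinearEquiv.ofBijective ((A' + B : F →L[ℝ] H) : F →ₗ[ℝ] H)
      ⟨hinj', hsurj'⟩).toContinuousLinearEquiv, ContinuousLinearMap.ext fun v => rfl⟩
  -- smoothness of the global inverse
  have hinvsm : ContDiff ℝ 2 (Function.invFun Φt) := by
    rw [contDiff_iff_contDiffAt]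
    intro y
    obtain ⟨x, rfl⟩ := hbijt.surjective y
    obtain ⟨E₁, hE₁⟩ := hinvert x
    have hfd : HasFDerivAt Φt (E₁ : F →L[ℝ] H) x := by rw [hE₁]; exact hΦtd x
    have hcd : ContDiffAt ℝ 2 Φt x := hΦtsm.contDiffAt
    have hloc := hcd.to_localInverse (f' := E₁) hfd two_ne_zero
    have hevr : ∀ᶠ y in nhds (Φt x), Φt (hcd.localInverse hfd two_ne_zero y) = y :=
      (hcd.hasStrictFDerivAt' hfd two_ne_zero).eventually_right_inverse
    have hev' : Function.invFun Φt =ᶠ[nhds (Φt x)] hcd.localInverse hfd two_ne_zero :=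
      hevr.mono fun y hy => by
        conv_lhs => rw [← hy]
        exact Function.leftInverse_invFun hbijt.injective _
    exact hloc.congr_of_eventuallyEq hev'
  -- assemble
  refine ⟨Φt, hbijt, hΦtsm, hinvsm, ?_⟩
  filter_upwards [ball_mem_nhds z₀ hε] with z hz
  have h1 : θε z = 1 := hθε1 z (ball_subset_closedBall hz)
  show Φ z₀ + A' (z - z₀) + g z = Φ z
  rw [hgdef]
  simp only [h1, one_smul, hrrdef]
  abel
end

section
/- Let H and E be finite-dimensional Euclidean spaces, X ⊂ H and K ⊂ E compact subsets containing the origins, and S: H × E → H a C²-smooth map with S(0,0) = 0 and S(X × K) ⊂ X, satisfying the Dissipativity hypothesis: for every ε > 0 there is n_ε ≥ 1 such that |S_{n_ε}(u; 0, …, 0)| ≤ ε for all u ∈ X. Let {ζ_k} be a Markov process in E with Feller time-1 transition probability Q(y;·), with supp Q(y;·) ⊂ K for all y ∈ K, satisfying the Minorisation hypothesis (there exist r > 0 and a bounded continuous ρ: B̄_E(r) × E → ℝ₊ with ρ(0,0) > 0 such that Q(y; dz) ≥ ρ(y,z) ℓ(dz) for y ∈ K ∩ B̄_E(r)) and the Strong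 recurrence hypothesis (for every δ > 0 there exist l ≥ 1 and κ > 0 with Q_l(y; B_E(0,δ)) ≥ κ for all y ∈ K). Let 𝒫_m be the time-m transition probability of the Markov process U_k = (S(v_{k−1}, ζ_k), ζ_k) on 𝔛 = X × K. Then for every r > 0 there exist an integer m ≥ 1 and a number p > 0 such that 𝒫_m(U; B_𝔛(0, r)) ≥ p for every U ∈ 𝔛. -/
open MeasureTheory ProbabilityTheory Set Metric

/-- The trajectory of the system `u_k = S(u_{k-1}, ζ_k)` issued from `u₀`. -/
def traj {H E : Type*} (S : H × E → H) (u₀ : H) (ζ : ℕ → E) : ℕ → H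
  | 0 => u₀
  | k + 1 => S (traj S u₀ ζ k, ζ (k + 1))

/-- The time-`l` transition probability obtained by iterating the time-1 kernel. -/
noncomputable def kiter {E : Type*} [MeasurableSpace E] (Q : Kernel E E) : ℕ → Kernel E E
  | 0 => Kernel.id
  | l + 1 => (kiter Q l) ∘ₖ Q

/-- The time-1 transition probability `𝒫(U;·) = 𝒮_*((v,ξ), Q(ξ;·))` of the Markov process
`U_k = (S(v_{k-1}, ζ_k), ζ_k)` on the extended phase space. -/
noncomputable def Pstep {H E : Type*} [MeasurableSpace H] [MeasurableSpace E]
    (S : H × E → H) (Q : Kernel E E) (U : H × E) : Measure (H × E) :=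
  (Q U.2).map fun z => (S (U.1, z), z)

/-- The time-`m` transition probability of the Markov process on the extended phase space. -/
noncomputable def Piter {H E : Type*} [MeasurableSpace H] [MeasurableSpace E]
    (S : H × E → H) (Q : Kernel E E) : ℕ → H × E → Measure (H × E)
  | 0, U => Measure.dirac U
  | m + 1, U => (Pstep S Q U).bind (Piter S Q m)

namespace RecAux

/-! ### Deterministic trajectory lemmas -/

lemma traj_shift {H E : Type*} (S : H × E → H) (v : H) (ζ : ℕ → E) :
    ∀ k, traj S v ζ (k + 1) = traj S (S (v, ζ 1)) (fun i => ζ (i + 1)) k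
  | 0 => rfl
  | k + 1 => by
    show S (traj S v ζ (k+1), ζ (k+2)) = S (traj S (S (v, ζ 1)) (fun i => ζ (i+1)) k, ζ (k+2))
    rw [traj_shift S v ζ k]

lemma traj_mem {H E : Type*} {S : H × E → H} {X : Set H} {K : Set E}
    (hinv : ∀ u ∈ X, ∀ η ∈ K, S (u, η) ∈ X) :
    ∀ n (u : H), u ∈ X → ∀ ζ : ℕ → E, (∀ i, 1 ≤ i → i ≤ n → ζ i ∈ K) → traj S u ζ n ∈ X
  | 0, u, hu, ζ, _ => hu
  | n + 1, u, hu, ζ, hζ =>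
    hinv _ (traj_mem hinv n u hu ζ fun i h1 h2 => hζ i h1 (h2.trans (Nat.le_succ n)))
      _ (hζ (n+1) (Nat.succ_le_succ (Nat.zero_le n)) le_rfl)

lemma traj_close {H E : Type*}
    [NormedAddCommGroup H] [NormedAddCommGroup E]
    {S : H × E → H} (hS : Continuous S) {X : Set H} {K : Set E}
    (hX : IsCompact X) (hK : IsCompact K) (h0K : (0 : E) ∈ K)
    (hinv : ∀ u ∈ X, ∀ η ∈ K, S (u, η) ∈ X) :
    ∀ n, ∀ ε > (0:ℝ), ∃ δ > (0:ℝ), ∀ u ∈ X, ∀ ζ : ℕ → E,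
      (∀ i, 1 ≤ i → i ≤ n → ζ i ∈ K ∧ ‖ζ i‖ < δ) →
      dist (traj S u ζ n) (traj S u (fun _ => 0) n) < ε := by
  intro n
  induction n with
  | zero => exact fun ε hε => ⟨1, one_pos, fun u _ ζ _ => by simp [traj]; simpa using hε⟩
  | succ n ih =>
    intro ε hε
    have hUC : UniformContinuousOn S (X ×ˢ K) :=
      (hX.prod hK).uniformContinuousOn_of_continuous hS.continuousOn
    obtain ⟨δ₁, hδ₁, hδ₁'⟩ := Metric.uniformContinuousOn_iff.1 hUC ε hε
    obtain ⟨δ₂, hδ₂, hδ₂'⟩ := ih δ₁ hδ₁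
    refine ⟨min δ₁ δ₂, lt_min hδ₁ hδ₂, fun u hu ζ hζ => ?_⟩
    have hζn : ∀ i, 1 ≤ i → i ≤ n → ζ i ∈ K ∧ ‖ζ i‖ < δ₂ :=
      fun i h1 h2 => ⟨(hζ i h1 (h2.trans (Nat.le_succ n))).1,
        lt_of_lt_of_le (hζ i h1 (h2.trans (Nat.le_succ n))).2 (min_le_right _ _)⟩
    have hx : (traj S u ζ n, ζ (n+1)) ∈ X ×ˢ K :=
      ⟨traj_mem hinv n u hu ζ (fun i h1 h2 => (hζn i h1 h2).1),
        (hζ (n+1) (Nat.succ_le_succ (Nat.zero_le n)) le_rfl).1⟩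
    have hy : (traj S u (fun _ => (0:E)) n, (0:E)) ∈ X ×ˢ K :=
      ⟨traj_mem hinv n u hu _ (fun i _ _ => h0K), h0K⟩
    have hd : dist ((traj S u ζ n, ζ (n+1)) : H × E) (traj S u (fun _ => 0) n, (0:E)) < δ₁ := by
      rw [Prod.dist_eq]
      refine max_lt (hδ₂' u hu ζ hζn) ?_
      rw [dist_zero_right]
      exact lt_of_lt_of_le (hζ (n+1) (Nat.succ_le_succ (Nat.zero_le n)) le_rfl).2
        (min_le_left _ _)
    exact hδ₁' _ hx _ hy hd

/-! ### The extended Markov kernel -/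

variable {H E : Type*} [MeasurableSpace H] [MeasurableSpace E]

noncomputable def PSk (S : H × E → H) (Q : Kernel E E) : Kernel (H × E) (H × E) :=
  Kernel.map (Kernel.prod Kernel.id (Q.comap Prod.snd measurable_snd))
    (fun p : (H × E) × E => (S (p.1.1, p.2), p.2))

noncomputable def PKk (S : H × E → H) (Q : Kernel E E) : ℕ → Kernel (H × E) (H × E)
  | 0 => Kernel.id
  | k + 1 => PKk S Q k ∘ₖ PSk S Q

lemma measurable_g {S : H × E → H} (hSm : Measurable S) :
    Measurable (fun p : (H × E) × E => (S (p.1.1, p.2), p.2)) :=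
  (hSm.comp ((measurable_fst.fst).prodMk measurable_snd)).prodMk measurable_snd

lemma measurable_gU {S : H × E → H} (hSm : Measurable S) (v : H) :
    Measurable (fun z : E => (S (v, z), z)) :=
  (hSm.comp (measurable_const.prodMk measurable_id)).prodMk measurable_id

lemma PSk_apply {S : H × E → H} (hSm : Measurable S) (Q : Kernel E E) [IsMarkovKernel Q]
    (U : H × E) : PSk S Q U = (Q U.2).map (fun z => (S (U.1, z), z)) := by
  rw [PSk, Kernel.map_apply _ (measurable_g hSm), Kernel.prod_apply, Kernel.id_apply,
    Kernel.comap_apply, Measure.dirac_prod, Measure.map_map (measurable_g hSm)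
    measurable_prodMk_left]
  rfl

lemma PSk_apply' {S : H × E → H} (hSm : Measurable S) (Q : Kernel E E) [IsMarkovKernel Q]
    (U : H × E) : PSk S Q U = Pstep S Q U :=
  PSk_apply hSm Q U

lemma PSk_markov {S : H × E → H} (hSm : Measurable S) (Q : Kernel E E) [IsMarkovKernel Q] :
    IsMarkovKernel (PSk S Q) :=
  Kernel.IsMarkovKernel.map _ (measurable_g hSm)

lemma PKk_markov {S : H × E → H} (hSm : Measurable S) (Q : Kernel E E) [IsMarkovKernel Q] :
    ∀ k, IsMarkovKernel (PKk S Q k)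
  | 0 => by rw [PKk]; infer_instance
  | k + 1 => by
    rw [PKk]
    haveI := PKk_markov hSm Q k
    haveI := PSk_markov hSm Q
    infer_instance

lemma Piter_eq {S : H × E → H} (hSm : Measurable S) (Q : Kernel E E) [IsMarkovKernel Q] :
    ∀ k (U : H × E), Piter S Q k U = PKk S Q k U
  | 0, U => by simp [Piter, PKk, Kernel.id_apply]
  | k + 1, U => by
    have h : Piter S Q k = fun W => PKk S Q k W := funext (Piter_eq hSm Q k)
    show (Pstep S Q U).bind (Piter S Q k) = _
    rw [h, ← PSk_apply' hSm Q U]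
    show (PSk S Q U).bind (PKk S Q k) = PKk S Q (k+1) U
    rw [show PKk S Q (k+1) = PKk S Q k ∘ₖ PSk S Q from rfl, Kernel.comp_apply]

lemma PKk_add {S : H × E → H} (hSm : Measurable S) (Q : Kernel E E) [IsMarkovKernel Q] :
    ∀ a b, PKk S Q (a + b) = PKk S Q a ∘ₖ PKk S Q b
  | a, 0 => by rw [Nat.add_zero, show PKk S Q 0 = Kernel.id from rfl, Kernel.comp_id]
  | a, b + 1 => by
    haveI := PKk_markov hSm Q a
    rw [show a + (b + 1) = (a + b) + 1 from rfl,
      show PKk S Q ((a+b)+1) = PKk S Q (a+b) ∘ₖ PSk S Q from rfl,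
      PKk_add hSm Q a b, Kernel.comp_assoc,
      ← show PKk S Q (b+1) = PKk S Q b ∘ₖ PSk S Q from rfl]

/-- second-component marginal -/
lemma PKk_snd {S : H × E → H} (hSm : Measurable S) (Q : Kernel E E) [IsMarkovKernel Q] :
    ∀ k (U : H × E) (A : Set E), MeasurableSet A →
      PKk S Q k U (Prod.snd ⁻¹' A) = kiter Q k U.2 A
  | 0, U, A, hA => by
    rw [show PKk S Q 0 = Kernel.id from rfl, show kiter Q 0 = Kernel.id from rfl,
      Kernel.id_apply, Kernel.id_apply, Measure.dirac_apply' _ (measurable_snd hA),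
      Measure.dirac_apply' _ hA]
    by_cases h : U.2 ∈ A
    · rw [Set.indicator_of_mem h, Set.indicator_of_mem (show U ∈ Prod.snd ⁻¹' A from h)]
      rfl
    · rw [Set.indicator_of_notMem h,
        Set.indicator_of_notMem (show U ∉ Prod.snd ⁻¹' A from h)]
  | k + 1, U, A, hA => by
    rw [show PKk S Q (k+1) = PKk S Q k ∘ₖ PSk S Q from rfl,
      Kernel.comp_apply' _ _ _ (measurable_snd hA), PSk_apply hSm,
      lintegral_map ((Kernel.measurable_coe _ (measurable_snd hA))) (measurable_gU hSm U.1)]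
    have : ∀ z, PKk S Q k (S (U.1, z), z) (Prod.snd ⁻¹' A) = kiter Q k z A :=
      fun z => PKk_snd hSm Q k (S (U.1, z), z) A hA
    rw [lintegral_congr this, show kiter Q (k+1) = kiter Q k ∘ₖ Q from rfl,
      Kernel.comp_apply' _ _ _ hA]

/-- invariance of X ×ˢ K -/
lemma PKk_inv {S : H × E → H} (hSm : Measurable S) (Q : Kernel E E) [IsMarkovKernel Q]
    {X : Set H} {K : Set E} (hXm : MeasurableSet X) (hKm : MeasurableSet K)
    (hinv : ∀ u ∈ X, ∀ η ∈ K, S (u, η) ∈ X) (hsuppQ : ∀ y ∈ K, Q y Kᶜ = 0) :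
    ∀ k, ∀ U ∈ X ×ˢ K, PKk S Q k U ((X ×ˢ K)ᶜ) = 0
  | 0, U, hU => by
    rw [show PKk S Q 0 = Kernel.id from rfl, Kernel.id_apply,
      Measure.dirac_apply' _ (hXm.prod hKm).compl]
    rw [Set.indicator_of_notMem (Set.notMem_compl_iff.mpr hU)]
  | k + 1, U, hU => by
    have hC : MeasurableSet ((X ×ˢ K)ᶜ) := (hXm.prod hKm).compl
    rw [show PKk S Q (k+1) = PKk S Q k ∘ₖ PSk S Q from rfl, Kernel.comp_apply' _ _ _ hC]
    have hae : ∀ᵐ W ∂(PSk S Q U), W ∈ X ×ˢ K := by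
      rw [ae_iff]
      have h0 : PSk S Q U ((X ×ˢ K)ᶜ) = 0 := by
        rw [PSk_apply hSm, Measure.map_apply (measurable_gU hSm U.1) hC]
        refine measure_mono_null (fun z hz => ?_) (hsuppQ U.2 hU.2)
        intro hzK
        exact hz ⟨hinv U.1 hU.1 z hzK, hzK⟩
      exact h0
    have : ∀ᵐ W ∂(PSk S Q U), PKk S Q k W ((X ×ˢ K)ᶜ) = 0 := by
      filter_upwards [hae] with W hW
      exact PKk_inv hSm Q hXm hKm hinv hsuppQ k W hW
    calc ∫⁻ W, PKk S Q k W ((X ×ˢ K)ᶜ) ∂(PSk S Q U)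
        = ∫⁻ _, 0 ∂(PSk S Q U) := lintegral_congr_ae this
      _ = 0 := lintegral_zero

/-- the main small-noise induction -/
lemma claim_aux {S : H × E → H} (hSm : Measurable S) (Q : Kernel E E) [IsMarkovKernel Q]
    {X : Set H} {D : Set E} (hD : MeasurableSet D)
    (hinvD : ∀ u ∈ X, ∀ z ∈ D, S (u, z) ∈ X)
    {c : ENNReal} (hc1 : c ≤ 1) (hQD : ∀ y ∈ D, c ≤ Q y D)
    {B : Set (H × E)} (hB : MeasurableSet B) :
    ∀ k, ∀ v ∈ X, ∀ y ∈ D,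
      (∀ ζ : ℕ → E, ζ 0 = y → (∀ i, 1 ≤ i → i ≤ k → ζ i ∈ D) → (traj S v ζ k, ζ k) ∈ B) →
      c ^ k ≤ PKk S Q k (v, y) B
  | 0, v, hv, y, hy, hpath => by
    have : ((v, y) : H × E) ∈ B := by
      have := hpath (fun _ => y) rfl (fun i h1 h2 => absurd (h1.trans h2) (by omega))
      simpa [traj] using this
    rw [show PKk S Q 0 = Kernel.id from rfl, Kernel.id_apply, pow_zero,
      Measure.dirac_apply_of_mem this]
  | k + 1, v, hv, y, hy, hpath => by
    have key : ∀ z ∈ D, c ^ k ≤ PKk S Q k (S (v, z), z) B := by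
      intro z hz
      refine claim_aux hSm Q hD hinvD hc1 hQD hB k (S (v, z)) (hinvD v hv z hz) z hz ?_
      intro ζ' hζ'0 hζ'
      have hcond : ∀ i, 1 ≤ i → i ≤ k + 1 →
          (fun i => if i = 0 then y else ζ' (i - 1)) i ∈ D := by
        intro i h1 h2
        simp only [if_neg (by omega : ¬ i = 0)]
        by_cases h : i = 1
        · subst h; rw [show (1:ℕ) - 1 = 0 from rfl, hζ'0]; exact hz
        · exact hζ' (i - 1) (by omega) (by omega)
      have hmain := hpath _ rfl hcond
      have e1 : traj S v (fun i => if i = 0 then y else ζ' (i - 1)) (k + 1)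
          = traj S (S (v, z)) ζ' k := by
        rw [traj_shift]
        simp [hζ'0]
      have e2 : (if k + 1 = 0 then y else ζ' (k + 1 - 1)) = ζ' k := by simp
      rwa [e1, e2] at hmain
    rw [show PKk S Q (k+1) = PKk S Q k ∘ₖ PSk S Q from rfl, Kernel.comp_apply' _ _ _ hB,
      PSk_apply hSm, lintegral_map (Kernel.measurable_coe _ hB) (measurable_gU hSm v)]
    calc c ^ (k + 1) = c ^ k * c := pow_succ c k
      _ ≤ c ^ k * Q y D := mul_le_mul_right (hQD y hy) _
      _ = ∫⁻ _ in D, c ^ k ∂(Q y) := (setLIntegral_const D _).symm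
      _ ≤ ∫⁻ z in D, PKk S Q k (S (v, z), z) B ∂(Q y) :=
          setLIntegral_mono ((Kernel.measurable_coe _ hB).comp (measurable_gU hSm v)) key
      _ ≤ ∫⁻ z, PKk S Q k (S (v, z), z) B ∂(Q y) := setLIntegral_le_lintegral _ _

end RecAux

/-- **Recurrence property (Rec).**  Under the Dissipativity hypothesis on `S` and the
Minorisation and Strong recurrence hypotheses on the transition probability `Q` (supported by
the compact set `K`), for every `r > 0` there exist an integer `m ≥ 1` and a number `p > 0`
such that the time-`m` transition probability of the Markov process
`U_k = (S(v_{k-1}, ζ_k), ζ_k)` on `𝔛 = X × K` satisfies `𝒫_m(U; B_𝔛(0,r)) ≥ p` for all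
`U ∈ 𝔛`. -/
theorem recurrence_property
    {H E : Type*}
    [NormedAddCommGroup H] [InnerProductSpace ℝ H] [FiniteDimensional ℝ H]
    [MeasurableSpace H] [BorelSpace H]
    [NormedAddCommGroup E] [InnerProductSpace ℝ E] [FiniteDimensional ℝ E]
    [MeasureSpace E] [BorelSpace E] [(volume : Measure E).IsAddHaarMeasure]
    (X : Set H) (K : Set E) (hX : IsCompact X) (hK : IsCompact K)
    (h0X : (0 : H) ∈ X) (h0K : (0 : E) ∈ K)
    (S : H × E → H) (hS : ContDiff ℝ 2 S) (hS0 : S (0, 0) = 0)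
    (hinv : ∀ u ∈ X, ∀ η ∈ K, S (u, η) ∈ X)
    -- Dissipativity
    (hdiss : ∀ ε > 0, ∃ n : ℕ, 1 ≤ n ∧ ∀ u ∈ X, ‖traj S u (fun _ => 0) n‖ ≤ ε)
    -- the transition probability Q
    (Q : Kernel E E) [IsMarkovKernel Q]
    (hFeller : ∀ f : BoundedContinuousFunction E ℝ, Continuous fun y => ∫ z, f z ∂(Q y))
    (hsuppQ : ∀ y ∈ K, Q y Kᶜ = 0)
    -- Minorisation
    (hminor : ∃ r > 0, ∃ ρ : E → E → ℝ,
      (∀ y z, 0 ≤ ρ y z) ∧ (∃ Cb : ℝ, ∀ y z, ρ y z ≤ Cb) ∧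
      ContinuousOn (fun p : E × E => ρ p.1 p.2) (closedBall 0 r ×ˢ univ) ∧
      0 < ρ 0 0 ∧
      ∀ y ∈ K ∩ closedBall 0 r, ∀ A : Set E, MeasurableSet A →
        ∫⁻ z in A, ENNReal.ofReal (ρ y z) ≤ Q y A)
    -- Strong recurrence
    (hrec : ∀ δ > 0, ∃ l : ℕ, 1 ≤ l ∧ ∃ κ > 0, ∀ y ∈ K,
      ENNReal.ofReal κ ≤ (kiter Q l) y (ball 0 δ)) :
    ∀ r > 0, ∃ m : ℕ, 1 ≤ m ∧ ∃ p > 0, ∀ U ∈ X ×ˢ K,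
      ENNReal.ofReal p ≤ Piter S Q m U (ball (0 : H × E) r ∩ X ×ˢ K) := by
  intro r hr
  have hSm : Measurable S := hS.continuous.measurable
  have hXm : MeasurableSet X := hX.isClosed.measurableSet
  have hKm : MeasurableSet K := hK.isClosed.measurableSet
  obtain ⟨rm, hrm, ρ, hρnn, ⟨Cb, hCb⟩, hρcont, hρ00, hρmin⟩ := hminor
  -- continuity of ρ at (0,0) gives a neighbourhood of positivity
  have hmemnhds : closedBall (0:E) rm ×ˢ (univ : Set E) ∈ nhds ((0:E), (0:E)) :=
    prod_mem_nhds (closedBall_mem_nhds _ hrm) Filter.univ_mem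
  have hca : ContinuousAt (fun p : E × E => ρ p.1 p.2) (0, 0) :=
    hρcont.continuousAt hmemnhds
  have hev : ∀ᶠ p : E × E in nhds ((0:E), (0:E)), ρ 0 0 / 2 < ρ p.1 p.2 :=
    hca.eventually (eventually_gt_nhds (half_lt_self hρ00))
  obtain ⟨δ₀, hδ₀, hδ₀'⟩ := Metric.eventually_nhds_iff_ball.1 hev
  -- dissipativity
  obtain ⟨n, hn1, hdn⟩ := hdiss (r/2) (by linarith)
  -- uniform closeness of trajectories
  obtain ⟨δA, hδA, hδA'⟩ :=
    RecAux.traj_close hS.continuous hX hK h0K hinv n (r/4) (by linarith)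
  set δ := min (min δA δ₀) (min rm r) with hδdef
  have hδ : 0 < δ := lt_min (lt_min hδA hδ₀) (lt_min hrm hr)
  have hδA_le : δ ≤ δA := (min_le_left _ _).trans (min_le_left _ _)
  have hδ₀_le : δ ≤ δ₀ := (min_le_left _ _).trans (min_le_right _ _)
  have hrm_le : δ ≤ rm := (min_le_right _ _).trans (min_le_left _ _)
  have hr_le : δ ≤ r := (min_le_right _ _).trans (min_le_right _ _)
  set D := ball (0:E) δ ∩ K with hDdef
  have hDm : MeasurableSet D := measurableSet_ball.inter hKm
  have hDK : ∀ z ∈ D, z ∈ K := fun z hz => hz.2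
  -- minorisation bound on one step
  set c₀ : ENNReal := ENNReal.ofReal (ρ 0 0 / 2) * volume (ball (0:E) δ) with hc₀def
  have hc₀pos : 0 < c₀ :=
    ENNReal.mul_pos (ENNReal.ofReal_pos.mpr (half_pos hρ00)).ne'
      (measure_ball_pos volume 0 hδ).ne'
  set c : ENNReal := min c₀ 1 with hcdef
  have hcpos : 0 < c := lt_min hc₀pos zero_lt_one
  have hc1 : c ≤ 1 := min_le_right _ _
  have hQD : ∀ y ∈ D, c ≤ Q y D := by
    intro y hy
    have hyK : y ∈ K := hy.2
    have hyb : ‖y‖ < δ := mem_ball_zero_iff.1 hy.1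
    have hyrm : y ∈ K ∩ closedBall 0 rm :=
      ⟨hyK, mem_closedBall_zero_iff.2 (le_of_lt (lt_of_lt_of_le hyb hrm_le))⟩
    have hcontz : Continuous fun z => ρ y z := by
      rw [← continuousOn_univ]
      have hemb : Continuous fun z : E => ((y, z) : E × E) :=
        continuous_const.prodMk continuous_id
      exact ContinuousOn.comp (g := fun p : E × E => ρ p.1 p.2)
        (f := fun z : E => ((y, z) : E × E)) (s := (univ : Set E))
        (t := closedBall 0 rm ×ˢ (univ : Set E)) hρcont hemb.continuousOn
        (fun z _ => ⟨hyrm.2, mem_univ z⟩)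
    have hmeasρ : Measurable fun z => ENNReal.ofReal (ρ y z) :=
      ENNReal.measurable_ofReal.comp hcontz.measurable
    have h1 : c₀ ≤ ∫⁻ z in ball (0:E) δ, ENNReal.ofReal (ρ y z) := by
      rw [hc₀def, ← setLIntegral_const]
      refine setLIntegral_mono hmeasρ ?_
      intro z hz
      refine ENNReal.ofReal_le_ofReal (le_of_lt (hδ₀' ((y, z) : E × E) ?_))
      rw [mem_ball, Prod.dist_eq]
      refine max_lt ?_ ?_
      · rw [dist_zero_right]; exact lt_of_lt_of_le hyb hδ₀_le
      · rw [dist_zero_right]; exact lt_of_lt_of_le (mem_ball_zero_iff.1 hz) hδ₀_le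
    have h2 := hρmin y hyrm (ball 0 δ) measurableSet_ball
    have h3 : Q y (ball 0 δ) ≤ Q y D := by
      calc Q y (ball 0 δ) ≤ Q y (ball 0 δ ∩ K) + Q y (ball 0 δ \ K) :=
            measure_le_inter_add_diff _ _ _
        _ ≤ Q y D + 0 := by
            refine add_le_add le_rfl ?_
            exact le_of_eq (measure_mono_null (fun x hx => hx.2) (hsuppQ y hyK))
        _ = Q y D := add_zero _
    exact le_trans (min_le_left _ _) (le_trans h1 (le_trans h2 h3))
  -- strong recurrence
  obtain ⟨l, hl1, κ, hκ, hκ'⟩ := hrec δ hδ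
  -- the target set
  set B := ball (0 : H × E) r ∩ X ×ˢ K with hBdef
  have hBm : MeasurableSet B := measurableSet_ball.inter (hXm.prod hKm)
  have hinvD : ∀ u ∈ X, ∀ z ∈ D, S (u, z) ∈ X := fun u hu z hz => hinv u hu z hz.2
  -- the small-noise claim after n steps
  have hclaim : ∀ W : H × E, W.1 ∈ X → W.2 ∈ D → c ^ n ≤ RecAux.PKk S Q n W B := by
    intro W hW1 hW2
    have hres := RecAux.claim_aux hSm Q hDm hinvD hc1 hQD hBm n W.1 hW1 W.2 hW2 ?_
    · simpa using hres
    intro ζ hζ0 hζi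
    have hζK : ∀ i, 1 ≤ i → i ≤ n → ζ i ∈ K ∧ ‖ζ i‖ < δA :=
      fun i h1 h2 => ⟨(hζi i h1 h2).2,
        lt_of_lt_of_le (mem_ball_zero_iff.1 (hζi i h1 h2).1) hδA_le⟩
    have hdist := hδA' W.1 hW1 ζ hζK
    have htrajX : traj S W.1 ζ n ∈ X :=
      RecAux.traj_mem hinv n W.1 hW1 ζ (fun i h1 h2 => (hζK i h1 h2).1)
    have hζnD : ζ n ∈ D := hζi n hn1 le_rfl
    refine ⟨?_, htrajX, hζnD.2⟩
    rw [mem_ball, Prod.dist_eq]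
    simp only [Prod.fst_zero, Prod.snd_zero]
    refine max_lt ?_ ?_
    · have h0 : dist (traj S W.1 (fun _ => (0:E)) n) (0:H) ≤ r/2 := by
        rw [dist_zero_right]; exact hdn W.1 hW1
      calc dist (traj S W.1 ζ n) (0:H)
          ≤ dist (traj S W.1 ζ n) (traj S W.1 (fun _ => 0) n)
            + dist (traj S W.1 (fun _ => (0:E)) n) (0:H) := dist_triangle _ _ _
        _ < r/4 + r/2 := add_lt_add_of_lt_of_le hdist h0
        _ < r := by linarith
    · rw [dist_zero_right]
      exact lt_of_lt_of_le (mem_ball_zero_iff.1 hζnD.1) hr_le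
  -- the quantity p
  have hcn_ne_top : c ^ n ≠ ⊤ := ((pow_le_one' hc1 n).trans_lt ENNReal.one_lt_top).ne
  have hq_ne_top : c ^ n * ENNReal.ofReal κ ≠ ⊤ :=
    ENNReal.mul_ne_top hcn_ne_top ENNReal.ofReal_ne_top
  have hq_ne_zero : c ^ n * ENNReal.ofReal κ ≠ 0 :=
    mul_ne_zero (pow_ne_zero n hcpos.ne') (ENNReal.ofReal_pos.mpr hκ).ne'
  refine ⟨n + l, le_trans hn1 (Nat.le_add_right n l),
    (c ^ n * ENNReal.ofReal κ).toReal, ENNReal.toReal_pos hq_ne_zero hq_ne_top, ?_⟩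
  intro U hU
  rw [RecAux.Piter_eq hSm Q (n + l) U, ENNReal.ofReal_toReal hq_ne_top]
  have hdecomp : RecAux.PKk S Q (n + l) U B
      = ∫⁻ W, RecAux.PKk S Q n W B ∂(RecAux.PKk S Q l U) := by
    rw [RecAux.PKk_add hSm Q n l, Kernel.comp_apply' _ _ _ hBm]
  -- lower bound for the measure of X ×ˢ D after l steps
  have hG : ENNReal.ofReal κ ≤ RecAux.PKk S Q l U (X ×ˢ D) := by
    have hmarg : RecAux.PKk S Q l U (Prod.snd ⁻¹' ball 0 δ) = kiter Q l U.2 (ball 0 δ) :=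
      RecAux.PKk_snd hSm Q l U _ measurableSet_ball
    have hinv0 : RecAux.PKk S Q l U ((X ×ˢ K)ᶜ) = 0 :=
      RecAux.PKk_inv hSm Q hXm hKm hinv hsuppQ l U hU
    calc ENNReal.ofReal κ ≤ kiter Q l U.2 (ball 0 δ) := hκ' U.2 hU.2
      _ = RecAux.PKk S Q l U (Prod.snd ⁻¹' ball 0 δ) := hmarg.symm
      _ ≤ RecAux.PKk S Q l U ((Prod.snd ⁻¹' ball 0 δ) ∩ X ×ˢ K)
          + RecAux.PKk S Q l U ((Prod.snd ⁻¹' ball 0 δ) \ X ×ˢ K) :=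
            measure_le_inter_add_diff _ _ _
      _ ≤ RecAux.PKk S Q l U (X ×ˢ D) + 0 := by
          refine add_le_add (measure_mono ?_) (le_of_eq ?_)
          · rintro W ⟨hWb, hWX, hWK⟩
            exact ⟨hWX, hWb, hWK⟩
          · exact measure_mono_null (fun W hW => hW.2) hinv0
      _ = RecAux.PKk S Q l U (X ×ˢ D) := add_zero _
  calc c ^ n * ENNReal.ofReal κ
      ≤ c ^ n * RecAux.PKk S Q l U (X ×ˢ D) := mul_le_mul_right hG _
    _ = ∫⁻ _ in X ×ˢ D, c ^ n ∂(RecAux.PKk S Q l U) := (setLIntegral_const _ _).symm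
    _ ≤ ∫⁻ W in X ×ˢ D, RecAux.PKk S Q n W B ∂(RecAux.PKk S Q l U) :=
        setLIntegral_mono (Kernel.measurable_coe _ hBm) (fun W hW => hclaim W hW.1 hW.2)
    _ ≤ ∫⁻ W, RecAux.PKk S Q n W B ∂(RecAux.PKk S Q l U) := setLIntegral_le_lintegral _ _
    _ = RecAux.PKk S Q (n + l) U B := hdecomp.symm
end

section
/- Let E be a finite-dimensional Euclidean space, K ⊂ E a compact set containing 0, and Q(y;·) a Feller transition probability on E with supp Q(y;·) ⊂ K for all y ∈ K, satisfying the Minorisation hypothesis: there exist r > 0 and a bounded continuous function ρ: B̄_E(r) × E → ℝ₊ with ρ(0,0) > 0 such that Q(y; dz) ≥ ρ(y,z) ℓ(dz) for y ∈ K ∩ B̄_E(r). Then there exists δ₀ > 0 such that for every δ ∈ (0, δ₀] and every integer m ≥ 1 there is a number p₁ = p₁(m, δ) > 0 such that the Markov chain {ζ_k} with transition probability Q issued from ζ_0 = 0 satisfies P{‖ζ_k‖ < δ for 1 ≤ k ≤ m} ≥ p₁. -/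
open MeasureTheory ProbabilityTheory Set Metric

/-- The sequence `ζ` is a homogeneous Markov process on `(Ω, ℱ, P)` with transition kernel `Q`. -/
def IsMarkovWrt {Ω K : Type*} {mΩ : MeasurableSpace Ω} [MeasurableSpace K]
    (P : Measure Ω) (ℱ : Filtration ℕ mΩ) (ζ : ℕ → Ω → K) (Q : Kernel K K) : Prop :=
  (∀ k, Measurable[ℱ k] (ζ k)) ∧
  ∀ (k : ℕ) (A : Set K), MeasurableSet A →
    (fun ω => ((Q (ζ k ω)) A).toReal)
      =ᵐ[P] P[fun ω => A.indicator (fun _ => (1 : ℝ)) (ζ (k + 1) ω)|ℱ k]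


lemma key_step {Ω E : Type*} [MeasurableSpace E]
    {mΩ : MeasurableSpace Ω} (P : Measure Ω) [IsProbabilityMeasure P]
    (ℱ : Filtration ℕ mΩ) (ζ : ℕ → Ω → E) (Q : Kernel E E) [IsMarkovKernel Q]
    (hM : IsMarkovWrt P ℱ ζ Q) (n : ℕ) (S : Set Ω) (hS : MeasurableSet[ℱ n] S)
    (A : Set E) (hA : MeasurableSet A) (ε : ℝ) (hε : 0 ≤ ε)
    (hQ : ∀ ω ∈ S, ENNReal.ofReal ε ≤ Q (ζ n ω) A) :
    ENNReal.ofReal ε * P S ≤ P (S ∩ ζ (n+1) ⁻¹' A) := by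
  have hζmeas : Measurable (ζ (n+1)) := (hM.1 (n+1)).mono (ℱ.le (n+1)) le_rfl
  have hmeas_pre : MeasurableSet (ζ (n+1) ⁻¹' A) := hζmeas hA
  set f : Ω → ℝ := fun ω => A.indicator (fun _ => (1:ℝ)) (ζ (n+1) ω) with hfdef
  have hfeq : f = (ζ (n+1) ⁻¹' A).indicator (fun _ => (1:ℝ)) := by
    ext ω; by_cases h : ζ (n+1) ω ∈ A <;> simp [hfdef, Set.indicator, h]
  have hfint : Integrable f P := by
    rw [hfeq]; exact (integrable_const 1).indicator hmeas_pre
  have h1 : ∫ ω in S, f ω ∂P = (P (S ∩ ζ (n+1) ⁻¹' A)).toReal := by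
    rw [hfeq, setIntegral_indicator hmeas_pre]
    simp
    rfl
  have haes := hM.2 n A hA
  have h2 : ∫ ω in S, (Q (ζ n ω) A).toReal ∂P = ∫ ω in S, f ω ∂P := by
    rw [setIntegral_congr_ae (ℱ.le n S hS) (haes.mono fun ω hω _ => hω)]
    exact setIntegral_condExp (ℱ.le n) hfint hS
  have hQint : IntegrableOn (fun ω => (Q (ζ n ω) A).toReal) S P :=
    (integrable_condExp.integrableOn).congr (ae_restrict_of_ae haes.symm)
  have h3 : ε * (P S).toReal ≤ ∫ ω in S, (Q (ζ n ω) A).toReal ∂P := by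
    refine setIntegral_ge_of_const_le_real (ℱ.le n S hS) (measure_ne_top P S)
      (fun ω hω => ?_) hQint
    exact (ENNReal.ofReal_le_iff_le_toReal (measure_ne_top _ _)).1 (hQ ω hω)
  have h4 : ε * (P S).toReal ≤ (P (S ∩ ζ (n+1) ⁻¹' A)).toReal :=
    h3.trans_eq (h2.trans h1)
  calc ENNReal.ofReal ε * P S = ENNReal.ofReal (ε * (P S).toReal) := by
        rw [ENNReal.ofReal_mul hε, ENNReal.ofReal_toReal (measure_ne_top P S)]
    _ ≤ ENNReal.ofReal ((P (S ∩ ζ (n+1) ⁻¹' A)).toReal) := ENNReal.ofReal_le_ofReal h4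
    _ = P (S ∩ ζ (n+1) ⁻¹' A) := ENNReal.ofReal_toReal (measure_ne_top _ _)

/-- Under the Minorisation hypothesis, the Markov chain with transition probability `Q` issued
from `ζ_0 = 0` stays, with positive probability, in an arbitrarily small ball around zero for
arbitrarily long times: there exists `δ₀ > 0` such that for every `δ ∈ (0, δ₀]` and every
integer `m ≥ 1` there is `p₁ = p₁(m, δ) > 0` with `P{‖ζ_k‖ < δ for 1 ≤ k ≤ m} ≥ p₁`. -/
theorem chain_stays_near_zero
    {E : Type*}
    [NormedAddCommGroup E] [InnerProductSpace ℝ E] [FiniteDimensional ℝ E]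
    [MeasureSpace E] [BorelSpace E] [(volume : Measure E).IsAddHaarMeasure]
    (K : Set E) (hK : IsCompact K) (h0K : (0 : E) ∈ K)
    (Q : Kernel E E) [IsMarkovKernel Q]
    (hFeller : ∀ f : BoundedContinuousFunction E ℝ, Continuous fun y => ∫ z, f z ∂(Q y))
    (hsuppQ : ∀ y ∈ K, Q y Kᶜ = 0)
    -- Minorisation
    (hminor : ∃ r > 0, ∃ ρ : E → E → ℝ,
      (∀ y z, 0 ≤ ρ y z) ∧ (∃ Cb : ℝ, ∀ y z, ρ y z ≤ Cb) ∧
      ContinuousOn (fun p : E × E => ρ p.1 p.2) (closedBall 0 r ×ˢ univ) ∧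
      0 < ρ 0 0 ∧
      ∀ y ∈ K ∩ closedBall 0 r, ∀ A : Set E, MeasurableSet A →
        ∫⁻ z in A, ENNReal.ofReal (ρ y z) ≤ Q y A) :
    ∃ δ₀ > 0, ∀ δ : ℝ, 0 < δ → δ ≤ δ₀ → ∀ m : ℕ, 1 ≤ m → ∃ p₁ > 0,
      ∀ (Ω : Type) (mΩ : MeasurableSpace Ω) (P : Measure Ω), IsProbabilityMeasure P →
        ∀ (ℱ : Filtration ℕ mΩ) (ζ : ℕ → Ω → E), IsMarkovWrt P ℱ ζ Q →
          (∀ ω, ζ 0 ω = 0) →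
          ENNReal.ofReal p₁ ≤ P {ω | ∀ k : ℕ, 1 ≤ k → k ≤ m → ‖ζ k ω‖ < δ} := by
  obtain ⟨r, hr, ρ, hρ0, ⟨Cb, hCb⟩, hρcont, hρ00, hminor'⟩ := hminor
  set c : ℝ := ρ 0 0 / 2 with hcdef
  have hc : 0 < c := half_pos hρ00
  -- continuity at (0,0)
  have hmem : ((0:E), (0:E)) ∈ closedBall (0:E) r ×ˢ (univ : Set E) := by
    simp [le_of_lt hr]
  have hnhds : closedBall (0:E) r ×ˢ (univ : Set E) ∈ nhds (((0:E), (0:E)) : E × E) :=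
    prod_mem_nhds (closedBall_mem_nhds 0 hr) Filter.univ_mem
  have hca : ContinuousAt (fun p : E × E => ρ p.1 p.2) (0,0) :=
    (hρcont (0,0) hmem).continuousAt hnhds
  have hev : ∀ᶠ p in nhds (((0:E),(0:E)) : E × E), c < ρ p.1 p.2 :=
    hca.eventually (eventually_gt_nhds (half_lt_self hρ00))
  rw [Metric.eventually_nhds_iff] at hev
  obtain ⟨ε', hε', hball⟩ := hev
  set δ₀ : ℝ := min (ε'/2) r with hδ₀def
  have hδ₀pos : 0 < δ₀ := lt_min (half_pos hε') hr
  have hδ₀r : δ₀ ≤ r := min_le_right _ _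
  have hbnd : ∀ y z : E, ‖y‖ ≤ δ₀ → ‖z‖ ≤ δ₀ → c ≤ ρ y z := by
    intro y z hy hz
    refine (hball (y := (y, z)) ?_).le
    rw [Prod.dist_eq]
    simp only [dist_zero_right]
    have : δ₀ < ε' := lt_of_le_of_lt (min_le_left _ _) (half_lt_self hε')
    exact max_lt (lt_of_le_of_lt hy this) (lt_of_le_of_lt hz this)
  -- lower bound on the kernel
  have hQbound : ∀ δ' : ℝ, 0 < δ' → δ' ≤ δ₀ → ∀ y ∈ K, ‖y‖ ≤ δ₀ →
      ENNReal.ofReal c * volume (ball (0:E) δ') ≤ Q y (K ∩ ball 0 δ') := by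
    intro δ' hδ' hδ'δ₀ y hyK hy
    have hyr : y ∈ closedBall (0:E) r := mem_closedBall_zero_iff.2 (hy.trans hδ₀r)
    have hcont_y : Continuous fun z => ρ y z := by
      rw [← continuousOn_univ]
      exact hρcont.comp ((continuous_const.prodMk continuous_id).continuousOn)
        (fun z _ => ⟨hyr, mem_univ z⟩)
    have h1 : ENNReal.ofReal c * volume (ball (0:E) δ')
        ≤ ∫⁻ z in ball (0:E) δ', ENNReal.ofReal (ρ y z) := by
      rw [← setLIntegral_const]
      refine setLIntegral_mono (ENNReal.measurable_ofReal.comp hcont_y.measurable)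
        (fun z hz => ENNReal.ofReal_le_ofReal ?_)
      exact hbnd y z hy ((mem_ball_zero_iff.1 hz).le.trans hδ'δ₀)
    have h2 : (∫⁻ z in ball (0:E) δ', ENNReal.ofReal (ρ y z)) ≤ Q y (ball 0 δ') :=
      hminor' y ⟨hyK, hyr⟩ _ measurableSet_ball
    have h3 : Q y (ball (0:E) δ') ≤ Q y (K ∩ ball 0 δ') + Q y Kᶜ := by
      refine le_trans (measure_mono (fun z hz => ?_)) (measure_union_le _ _)
      by_cases h : z ∈ K
      · exact Or.inl ⟨h, hz⟩
      · exact Or.inr h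
    rw [hsuppQ y hyK, add_zero] at h3
    exact h1.trans (h2.trans h3)
  refine ⟨δ₀, hδ₀pos, fun δ hδ hδδ₀ m hm => ?_⟩
  set ε : ℝ := (ENNReal.ofReal c * volume (ball (0:E) δ)).toReal with hεdef
  have hvolpos : (0:ENNReal) < volume (ball (0:E) δ) := measure_ball_pos _ _ hδ
  have hvolne : volume (ball (0:E) δ) ≠ ⊤ := measure_ball_lt_top.ne
  have hnum_ne_top : ENNReal.ofReal c * volume (ball (0:E) δ) ≠ ⊤ :=
    ENNReal.mul_ne_top ENNReal.ofReal_ne_top hvolne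
  have hεpos : 0 < ε := ENNReal.toReal_pos
    (by
      refine mul_ne_zero ?_ hvolpos.ne'
      simpa [ENNReal.ofReal_eq_zero, not_le] using hc)
    hnum_ne_top
  refine ⟨ε ^ m, pow_pos hεpos m, fun Ω mΩ P hP ℱ ζ hMarkov hζ0 => ?_⟩
  set B : Set E := K ∩ ball 0 δ with hBdef
  have hBmeas : MeasurableSet B := hK.isClosed.measurableSet.inter measurableSet_ball
  set S : ℕ → Set Ω := fun n => Nat.rec Set.univ (fun k Sk => Sk ∩ ζ (k+1) ⁻¹' B) n with hSdef
  have hSsucc : ∀ n, S (n+1) = S n ∩ ζ (n+1) ⁻¹' B := fun n => rfl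
  have hSmeas : ∀ n, MeasurableSet[ℱ n] (S n) := by
    intro n
    induction n with
    | zero => exact MeasurableSet.univ
    | succ n ih =>
      rw [hSsucc]
      exact (ℱ.mono n.le_succ _ ih).inter ((hMarkov.1 (n+1)) hBmeas)
  have hSK : ∀ n, ∀ ω ∈ S n, ζ n ω ∈ K ∧ ‖ζ n ω‖ ≤ δ₀ := by
    intro n ω hω
    cases n with
    | zero => rw [hζ0 ω]; exact ⟨h0K, by simpa using hδ₀pos.le⟩
    | succ n =>
      rw [hSsucc] at hω
      obtain ⟨hK', hball'⟩ := hω.2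
      exact ⟨hK', (mem_ball_zero_iff.1 hball').le.trans hδδ₀⟩
  have hεofReal : ENNReal.ofReal ε = ENNReal.ofReal c * volume (ball (0:E) δ) :=
    ENNReal.ofReal_toReal hnum_ne_top
  have hmain : ∀ n, ENNReal.ofReal (ε ^ n) ≤ P (S n) := by
    intro n
    induction n with
    | zero => simp [hSdef]
    | succ n ih =>
      have hQn : ∀ ω ∈ S n, ENNReal.ofReal ε ≤ Q (ζ n ω) B := by
        intro ω hω
        obtain ⟨h1, h2⟩ := hSK n ω hω
        rw [hεofReal]
        exact hQbound δ hδ hδδ₀ _ h1 h2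
      have hstep := key_step P ℱ ζ Q hMarkov n (S n) (hSmeas n) B hBmeas ε hεpos.le hQn
      calc ENNReal.ofReal (ε ^ (n+1))
          = ENNReal.ofReal ε * ENNReal.ofReal (ε ^ n) := by
            rw [pow_succ, mul_comm (ε ^ n) ε, ENNReal.ofReal_mul hεpos.le]
        _ ≤ ENNReal.ofReal ε * P (S n) := mul_le_mul_right ih _
        _ ≤ P (S (n+1)) := by rw [hSsucc]; exact hstep
  have hSmono : ∀ n k, k ≤ n → S n ⊆ S k := by
    intro n
    induction n with
    | zero => intro k hk; rw [Nat.le_zero.1 hk]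
    | succ n ih =>
      intro k hk
      rcases eq_or_lt_of_le hk with rfl | h
      · exact subset_rfl
      · refine subset_trans ?_ (ih k (Nat.lt_succ_iff.1 h))
        rw [hSsucc]; exact inter_subset_left
  have hsub : S m ⊆ {ω | ∀ k : ℕ, 1 ≤ k → k ≤ m → ‖ζ k ω‖ < δ} := by
    intro ω hω k hk1 hkm
    cases k with
    | zero => omega
    | succ j =>
      have hωk : ω ∈ S (j + 1) := hSmono m (j + 1) hkm hω
      rw [hSsucc] at hωk
      exact mem_ball_zero_iff.1 hωk.2.2
  exact (hmain m).trans (measure_mono hsub)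
end

section
/- Let X be a compact subset of a finite-dimensional Euclidean space H, K a compact subset of a finite-dimensional Euclidean space E, S: H × E → H a continuous map with S(X × K) ⊂ X, and {η_k, k ∈ ℤ} a stationary process in E with values in K. Let 𝐊 = K^{ℤ₋}, σ the law of (η_k, k ∈ ℤ₋), ℰ = supp σ, and Q(𝛏;·) the conditional law of η₁ given the past 𝛏 ∈ ℰ, chosen continuous from ℰ to P(K). Let {ζ^𝛏, 𝛏 ∈ ℰ} be a measurable random field in E with D(ζ^𝛏) = Q(𝛏;·) for every 𝛏, let (Ω, F, P) be the countable product of copies of its underlying probability space with points ω = (ω₀, ω₁, …), and on 𝔛 = X × ℰ define the system U_k = 𝒮(U_{k−1}, ζ^{𝛏_{k−1}}(ω_k)), k ≥ 1, where U_k = (v_k, 𝛏_k) and 𝒮((v, 𝛏), η) = (S(v, η), (𝛏, η)). If the initial state U_0 = V(ω₀) has law δ_u ⊗ σ for a point u ∈ X, then for every integer n ≥ 0, D([v_0, …, v_n]) = D([u_0, …, u_n]), where {u_k} is the trajectory of the RDS u_k = S(u_{k−1}, η_k) with u_0 = u. -/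
open MeasureTheory ProbabilityTheory Set

/-- The support of a measure on a topological space. -/
def msupport {α : Type*} [TopologicalSpace α] [MeasurableSpace α] (σ : Measure α) : Set α :=
  {x | ∀ U : Set α, IsOpen U → x ∈ U → 0 < σ U}

/-- A past `ξp = (ξ_k, k ≤ 0)` (encoded by `ξp n = ξ_{-n}`) updated by a new observation `y`. -/
def seqAppend {E : Type*} (ξp : ℕ → E) (y : E) : ℕ → E
  | 0 => y
  | n + 1 => ξp n

theorem traj_congr {H E : Type*} (S : H × E → H) (u₀ : H) {ζ₁ ζ₂ : ℕ → E} :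
    ∀ k, (∀ j, 1 ≤ j → j ≤ k → ζ₁ j = ζ₂ j) → traj S u₀ ζ₁ k = traj S u₀ ζ₂ k
  | 0, _ => rfl
  | k+1, h => by
    simp only [traj]
    rw [traj_congr S u₀ k (fun j h1 h2 => h j h1 (Nat.le_succ_of_le h2)),
      h (k+1) (Nat.succ_le_succ (Nat.zero_le k)) le_rfl]

theorem measurable_traj {H E : Type*} [MeasurableSpace H] [MeasurableSpace E]
    {S : H × E → H} (hS : Measurable S) (u₀ : H) :
    ∀ k, Measurable fun ζ : ℕ → E => traj S u₀ ζ k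
  | 0 => measurable_const
  | k+1 => hS.comp ((measurable_traj hS u₀ k).prodMk (measurable_pi_apply (k+1)))

theorem measurable_seqAppend {E : Type*} [MeasurableSpace E] :
    Measurable (fun p : (ℕ → E) × E => seqAppend p.1 p.2) :=
  measurable_pi_lambda _ fun n => by
    cases n with
    | zero => exact measurable_snd
    | succ m => exact (measurable_pi_apply m).comp measurable_fst

theorem compl_msupport_eq {α : Type*} [TopologicalSpace α] [MeasurableSpace α] (σ : Measure α) :
    (msupport σ)ᶜ = ⋃₀ {U | IsOpen U ∧ σ U = 0} := by
  ext x
  simp only [mem_compl_iff, msupport, mem_setOf_eq, not_forall, mem_sUnion]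
  constructor
  · rintro ⟨U, hU, hx, h0⟩
    exact ⟨U, ⟨hU, by simpa using h0⟩, hx⟩
  · rintro ⟨U, ⟨hU, h0⟩, hx⟩
    exact ⟨U, hU, hx, by simp [h0]⟩

theorem isClosed_msupport {α : Type*} [TopologicalSpace α] [MeasurableSpace α] (σ : Measure α) :
    IsClosed (msupport σ) := by
  rw [← isOpen_compl_iff, compl_msupport_eq]
  exact isOpen_sUnion fun U hU => hU.1

theorem msupport_compl_null {α : Type*} [TopologicalSpace α] [MeasurableSpace α]
    [SecondCountableTopology α] (σ : Measure α) : σ (msupport σ)ᶜ = 0 := by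
  obtain ⟨T, hTc, hTsub, hTeq⟩ := TopologicalSpace.isOpen_sUnion_countable
    {U | IsOpen U ∧ σ U = 0} (fun s hs => hs.1)
  rw [compl_msupport_eq, ← hTeq]
  exact (measure_sUnion_null_iff hTc).mpr fun s hs => (hTsub hs).2

theorem measure_prod_ext {α β : Type*} [MeasurableSpace α] [MeasurableSpace β]
    {μ ν : Measure (α × β)} [IsProbabilityMeasure μ] [IsProbabilityMeasure ν]
    (h : ∀ B : Set α, MeasurableSet B → ∀ A : Set β, MeasurableSet A →
      μ (B ×ˢ A) = ν (B ×ˢ A)) : μ = ν := by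
  refine ext_of_generate_finite _ generateFrom_prod.symm isPiSystem_prod ?_ (by simp)
  rintro s ⟨B, hB, A, hA, rfl⟩
  exact h B hB A hA

def xiAux {H E Ω₁ : Type*} (V₀ : Ω₁ → H × (ℕ → E)) (ζ : (ℕ → E) → Ω₁ → E) :
    ℕ → (ℕ → Ω₁) → (ℕ → E)
  | 0, ω' => (V₀ (ω' 0)).2
  | k+1, ω' => seqAppend (xiAux V₀ ζ k ω') (ζ (xiAux V₀ ζ k ω') (ω' (k+1)))

theorem xiAux_congr {H E Ω₁ : Type*} (V₀ : Ω₁ → H × (ℕ → E)) (ζ : (ℕ → E) → Ω₁ → E) :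
    ∀ k {ω' ω'' : ℕ → Ω₁}, (∀ j ≤ k, ω' j = ω'' j) →
      xiAux V₀ ζ k ω' = xiAux V₀ ζ k ω''
  | 0, ω', ω'', h => by simp only [xiAux, h 0 le_rfl]
  | k+1, ω', ω'', h => by
    have ih := xiAux_congr V₀ ζ k (ω' := ω') (ω'' := ω'')
      (fun j hj => h j (Nat.le_succ_of_le hj))
    simp only [xiAux, ih, h (k+1) le_rfl]

theorem measurable_xiAux {H E Ω₁ : Type*} [MeasurableSpace H] [MeasurableSpace E]
    [MeasurableSpace Ω₁] {V₀ : Ω₁ → H × (ℕ → E)} {ζ : (ℕ → E) → Ω₁ → E}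
    (hV₀ : Measurable V₀) (hζ : Measurable fun p : (ℕ → E) × Ω₁ => ζ p.1 p.2) :
    ∀ k, Measurable (xiAux V₀ ζ k)
  | 0 => measurable_snd.comp (hV₀.comp (measurable_pi_apply 0))
  | k+1 => by
    have ih := measurable_xiAux hV₀ hζ k
    exact measurable_seqAppend.comp
      (ih.prodMk (hζ.comp (ih.prodMk (measurable_pi_apply (k+1)))))

/-- **Lemma 1.4 of [KS-2025] (reduction to the extended phase space).**  Let `S : H × E → H` be
continuous with `S(X × K) ⊂ X`, let `{η_k, k ∈ ℤ}` be a stationary process with values in the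
compact set `K`, `σ` the law of its past `(η_k, k ≤ 0)`, `ℰ = supp σ`, and `Q(ξp;·)` the
conditional law of `η₁` given the past, chosen continuous on `ℰ` (Feller property).  Let
`{ζ^ξp}` be a measurable random field with `D(ζ^ξp) = Q(ξp;·)`, defined on `(Ω₁, P₁)`, let
`(Ω, P)` be the countable product of copies of `(Ω₁, P₁)` (encoded by i.i.d. coordinate maps
`coords k` with law `P₁`), and consider the system `U_k = 𝒮(U_{k−1}, ζ^{ξp_{k−1}}(ω_k))` on
`𝔛 = X × ℰ`, `𝒮((v,ξp),η) = (S(v,η),(ξp,η))`, issued from an initial state `U_0 = V(ω₀)` with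
law `δ_u ⊗ σ`.  Then for every `n ≥ 0` the law of `[v_0, …, v_n]` equals the law of
`[u_0, …, u_n]`, where `{u_k}` is the trajectory of the RDS `u_k = S(u_{k−1}, η_k)`, `u_0 = u`. -/
theorem markovian_reduction_stationary_noise
    {H E : Type*}
    [NormedAddCommGroup H] [InnerProductSpace ℝ H] [FiniteDimensional ℝ H]
    [MeasurableSpace H] [BorelSpace H]
    [NormedAddCommGroup E] [InnerProductSpace ℝ E] [FiniteDimensional ℝ E]
    [MeasurableSpace E] [BorelSpace E]
    (X : Set H) (K : Set E) (hX : IsCompact X) (hK : IsCompact K)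
    (S : H × E → H) (hS : Continuous S)
    (hinv : ∀ u ∈ X, ∀ η ∈ K, S (u, η) ∈ X)
    -- the stationary noise, defined on `(Ω₀, P₀)`
    {Ω₀ : Type*} {mΩ₀ : MeasurableSpace Ω₀} (P₀ : Measure Ω₀) [IsProbabilityMeasure P₀]
    (η : ℤ → Ω₀ → E) (hmeas : ∀ k, Measurable (η k))
    (hstat : P₀.map (fun ω => fun k : ℤ => η (k + 1) ω)
      = P₀.map (fun ω => fun k : ℤ => η k ω))
    (hval : ∀ (k : ℤ) (ω : Ω₀), η k ω ∈ K)
    -- the conditional law `Q` of `η 1` given the past, continuous on `ℰ = supp σ`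
    (Q : (ℕ → E) → Measure E)
    (hQprob : ∀ ξp ∈ msupport (P₀.map (fun ω => fun n : ℕ => η (-(n : ℤ)) ω)),
      IsProbabilityMeasure (Q ξp))
    (hcond : ∀ A : Set E, MeasurableSet A → ∀ B : Set (ℕ → E), MeasurableSet B →
      P₀ {ω | (fun n : ℕ => η (-(n : ℤ)) ω) ∈ B ∧ η 1 ω ∈ A}
        = ∫⁻ ω in {ω | (fun n : ℕ => η (-(n : ℤ)) ω) ∈ B},
            Q (fun n : ℕ => η (-(n : ℤ)) ω) A ∂P₀)
    (hFeller : ∀ f : BoundedContinuousFunction E ℝ,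
      ContinuousOn (fun ξp => ∫ y, f y ∂(Q ξp))
        (msupport (P₀.map (fun ω => fun n : ℕ => η (-(n : ℤ)) ω))))
    -- the measurable random field `ζ^ξp` on `(Ω₁, P₁)` with `D(ζ^ξp) = Q(ξp;·)`
    {Ω₁ : Type*} {mΩ₁ : MeasurableSpace Ω₁} (P₁ : Measure Ω₁) [IsProbabilityMeasure P₁]
    (ζ : (ℕ → E) → Ω₁ → E)
    (hζmeas : Measurable fun p : (ℕ → E) × Ω₁ => ζ p.1 p.2)
    (hζlaw : ∀ ξp ∈ msupport (P₀.map (fun ω => fun n : ℕ => η (-(n : ℤ)) ω)),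
      P₁.map (ζ ξp) = Q ξp)
    -- `(Ω, P)` is the countable product of copies of `(Ω₁, P₁)`
    {Ω : Type*} {mΩ : MeasurableSpace Ω} (P : Measure Ω) [IsProbabilityMeasure P]
    (coords : ℕ → Ω → Ω₁) (hcoords : ∀ k, Measurable (coords k))
    (hindep : iIndepFun coords P)
    (hcoordslaw : ∀ k, P.map (coords k) = P₁)
    -- the initial state `V = V₀(ω₀)`, with law `δ_u ⊗ σ`
    (u : H) (hu : u ∈ X)
    (V₀ : Ω₁ → H × (ℕ → E)) (hV₀ : Measurable V₀)
    (hV₀law : P₁.map V₀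
      = (Measure.dirac u).prod (P₀.map (fun ω => fun n : ℕ => η (-(n : ℤ)) ω)))
    -- the trajectory `U_k = (v_k, ξp_k)` of the extended system
    (v : Ω → ℕ → H) (ξs : Ω → ℕ → (ℕ → E))
    (hv0 : ∀ ω, v ω 0 = (V₀ (coords 0 ω)).1)
    (hξ0 : ∀ ω, ξs ω 0 = (V₀ (coords 0 ω)).2)
    (hξrec : ∀ ω k, ξs ω (k + 1) = seqAppend (ξs ω k) (ζ (ξs ω k) (coords (k + 1) ω)))
    (hvrec : ∀ ω k, v ω (k + 1) = S (v ω k, ζ (ξs ω k) (coords (k + 1) ω))) :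
    ∀ n : ℕ, P.map (fun ω => fun i : Fin (n + 1) => v ω i)
      = P₀.map (fun ω₀ => fun i : Fin (n + 1) =>
          traj S u (fun j => η (j : ℤ) ω₀) i) := by
  have hSm : Measurable S := hS.measurable
  set σm : Measure (ℕ → E) := P₀.map (fun ω => fun n : ℕ => η (-(n : ℤ)) ω) with hσm
  -- basic measurability
  have hpast0 : Measurable (fun ω₀ : Ω₀ => fun m : ℕ => η (-(m : ℤ)) ω₀) :=
    measurable_pi_lambda _ fun m => hmeas _
  have hpast : ∀ n : ℕ, Measurable (fun ω₀ : Ω₀ => fun m : ℕ => η ((n : ℤ) - m) ω₀) :=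
    fun n => measurable_pi_lambda _ fun m => hmeas _
  have hpath : Measurable (fun ω₀ : Ω₀ => fun k : ℤ => η k ω₀) :=
    measurable_pi_lambda _ fun k => hmeas _
  have hpathn : ∀ n : ℕ, Measurable (fun ω₀ : Ω₀ => fun k : ℤ => η (k + (n : ℤ)) ω₀) :=
    fun n => measurable_pi_lambda _ fun k => hmeas _
  haveI : IsProbabilityMeasure σm := by
    rw [hσm]; exact Measure.isProbabilityMeasure_map hpast0.aemeasurable
  -- iterated stationarity
  have hshift1 : Measurable (fun g : ℤ → E => fun k : ℤ => g (k + 1)) :=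
    measurable_pi_lambda _ fun k => measurable_pi_apply _
  have hshift : ∀ n : ℕ, P₀.map (fun ω₀ => fun k : ℤ => η (k + (n : ℤ)) ω₀)
      = P₀.map (fun ω₀ => fun k : ℤ => η k ω₀) := by
    intro n
    induction n with
    | zero =>
      have h0 : (fun ω₀ : Ω₀ => fun k : ℤ => η (k + ((0 : ℕ) : ℤ)) ω₀)
          = fun ω₀ => fun k : ℤ => η k ω₀ := by
        funext ω₀ k; norm_num
      rw [h0]
    | succ n ih =>
      have h1 : (fun ω₀ : Ω₀ => fun k : ℤ => η (k + ((n + 1 : ℕ) : ℤ)) ω₀)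
          = (fun g : ℤ → E => fun k : ℤ => g (k + 1))
            ∘ (fun ω₀ => fun k : ℤ => η (k + (n : ℤ)) ω₀) := by
        funext ω₀ k
        show η (k + ((n + 1 : ℕ) : ℤ)) ω₀ = η ((k + 1) + (n : ℤ)) ω₀
        congr 1
        push_cast; ring
      have h2 : ((fun g : ℤ → E => fun k : ℤ => g (k + 1))
          ∘ (fun ω₀ : Ω₀ => fun k : ℤ => η k ω₀))
          = fun ω₀ => fun k : ℤ => η (k + 1) ω₀ := rfl
      rw [h1, ← Measure.map_map hshift1 (hpathn n), ih,
        Measure.map_map hshift1 hpath, h2, hstat]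
  -- the law of the `n`-past is `σm`
  have hTm : Measurable (fun g : ℤ → E => fun m : ℕ => g (-(m : ℤ))) :=
    measurable_pi_lambda _ fun m => measurable_pi_apply _
  have hpastlaw : ∀ n : ℕ,
      P₀.map (fun ω₀ => fun m : ℕ => η ((n : ℤ) - m) ω₀) = σm := by
    intro n
    have h1 : (fun ω₀ : Ω₀ => fun m : ℕ => η ((n : ℤ) - m) ω₀)
        = (fun g : ℤ → E => fun m : ℕ => g (-(m : ℤ)))
          ∘ (fun ω₀ => fun k : ℤ => η (k + (n : ℤ)) ω₀) := by
      funext ω₀ m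
      show η ((n : ℤ) - m) ω₀ = η (-(m : ℤ) + n) ω₀
      congr 1; ring
    have h0 : (fun ω₀ : Ω₀ => fun m : ℕ => η (-(m : ℤ)) ω₀)
        = (fun g : ℤ → E => fun m : ℕ => g (-(m : ℤ)))
          ∘ (fun ω₀ => fun k : ℤ => η k ω₀) := rfl
    rw [h1, ← Measure.map_map hTm (hpathn n), hshift n,
      Measure.map_map hTm hpath, hσm, h0]
  -- law of the pair (past_n, η (n+1)) does not depend on n
  set ν : Measure ((ℕ → E) × E) :=
    P₀.map (fun ω₀ => ((fun m : ℕ => η (-(m : ℤ)) ω₀), η 1 ω₀)) with hν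
  haveI : IsProbabilityMeasure ν := by
    rw [hν]; exact Measure.isProbabilityMeasure_map (hpast0.prodMk (hmeas 1)).aemeasurable
  have hGp : Measurable (fun g : ℤ → E => ((fun m : ℕ => g (-(m : ℤ))), g 1)) :=
    hTm.prodMk (measurable_pi_apply 1)
  have hpairn : ∀ n : ℕ, Measurable
      (fun ω₀ : Ω₀ => ((fun m : ℕ => η ((n : ℤ) - m) ω₀), η ((n : ℤ) + 1) ω₀)) :=
    fun n => (hpast n).prodMk (hmeas _)
  have hpairlaw : ∀ n : ℕ,
      P₀.map (fun ω₀ => ((fun m : ℕ => η ((n : ℤ) - m) ω₀), η ((n : ℤ) + 1) ω₀)) = ν := by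
    intro n
    have h1 : (fun ω₀ : Ω₀ => ((fun m : ℕ => η ((n : ℤ) - m) ω₀), η ((n : ℤ) + 1) ω₀))
        = (fun g : ℤ → E => ((fun m : ℕ => g (-(m : ℤ))), g 1))
          ∘ (fun ω₀ => fun k : ℤ => η (k + (n : ℤ)) ω₀) := by
      funext ω₀
      show _ = ((fun m : ℕ => η (-(m : ℤ) + n) ω₀), η (1 + (n : ℤ)) ω₀)
      simp only [Prod.mk.injEq]
      refine ⟨?_, by congr 1; ring⟩
      funext m; congr 1; ring
    have h0 : (fun ω₀ : Ω₀ => ((fun m : ℕ => η (-(m : ℤ)) ω₀), η 1 ω₀))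
        = (fun g : ℤ → E => ((fun m : ℕ => g (-(m : ℤ))), g 1))
          ∘ (fun ω₀ => fun k : ℤ => η k ω₀) := rfl
    rw [h1, ← Measure.map_map hGp (hpathn n), hshift n,
      Measure.map_map hGp hpath, hν, h0]
  -- the trajectory of pasts as a function of the coordinates
  have hxi : ∀ (ω : Ω) (k : ℕ), ξs ω k = xiAux V₀ ζ k (fun j => coords j ω) := by
    intro ω k
    induction k with
    | zero => rw [hξ0]; rfl
    | succ k ihk => rw [hξrec ω k, ihk]; rfl
  have hξmeas : ∀ k, Measurable (fun ω => ξs ω k) := by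
    intro k
    have h1 : (fun ω => ξs ω k) = (xiAux V₀ ζ k) ∘ (fun ω => fun j : ℕ => coords j ω) :=
      funext fun ω => hxi ω k
    rw [h1]
    exact (measurable_xiAux hV₀ hζmeas k).comp (measurable_pi_lambda _ hcoords)
  -- the initial condition is a.s. `u`
  have hv0ae : ∀ᵐ ω ∂P, v ω 0 = u := by
    have hf : Measurable (fun ω => (V₀ (coords 0 ω)).1) :=
      measurable_fst.comp (hV₀.comp (hcoords 0))
    have hlaw : P.map (fun ω => (V₀ (coords 0 ω)).1) = Measure.dirac u := by
      have h1 : (fun ω => (V₀ (coords 0 ω)).1) = Prod.fst ∘ (V₀ ∘ coords 0) := rfl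
      rw [h1, ← Measure.map_map measurable_fst (hV₀.comp (hcoords 0)),
        ← Measure.map_map hV₀ (hcoords 0), hcoordslaw 0, hV₀law, Measure.map_fst_prod]
      simp
    have hms : MeasurableSet {x : H | x ≠ u} := by
      have h2 : {x : H | x ≠ u} = {u}ᶜ := by ext x; simp
      rw [h2]; exact (measurableSet_singleton u).compl
    have h0 : P {ω | (V₀ (coords 0 ω)).1 ≠ u} = 0 := by
      have h3 := Measure.map_apply (μ := P) hf hms
      rw [hlaw] at h3
      have h4 : {ω | (V₀ (coords 0 ω)).1 ≠ u}
          = (fun ω => (V₀ (coords 0 ω)).1) ⁻¹' {x | x ≠ u} := rfl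
      rw [h4, ← h3, Measure.dirac_apply' _ hms]
      simp
    have h5 : ∀ᵐ ω ∂P, (V₀ (coords 0 ω)).1 = u := by
      rw [ae_iff]; exact h0
    filter_upwards [h5] with ω hω
    rw [hv0 ω]; exact hω
  -- the law of `ξs · n` is `σm` for every `n`
  have hA : ∀ n : ℕ, P.map (fun ω => ξs ω n) = σm := by
    intro n
    induction n with
    | zero =>
      have hcomp : (fun ω => ξs ω 0) = Prod.snd ∘ (V₀ ∘ coords 0) :=
        funext fun ω => hξ0 ω
      rw [hcomp, ← Measure.map_map measurable_snd (hV₀.comp (hcoords 0)),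
        ← Measure.map_map hV₀ (hcoords 0), hcoordslaw 0, hV₀law, Measure.map_snd_prod]
      simp
    | succ n ih =>
      classical
      -- independence of `ξs · n` and `coords (n+1)`
      have hindep2 : IndepFun (fun ω => ξs ω n) (coords (n + 1)) P := by
        have hdisj : Disjoint (Finset.range (n + 1)) ({n + 1} : Finset ℕ) := by
          simp [Finset.disjoint_singleton_right]
        have hIF := hindep.indepFun_finset (Finset.range (n + 1)) {n + 1} hdisj hcoords
        have h0mem : (0 : ℕ) ∈ Finset.range (n + 1) := Finset.mem_range.mpr (Nat.succ_pos n)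
        let Φ : ((i : (Finset.range (n + 1) : Finset ℕ)) → Ω₁) → (ℕ → E) :=
          fun p => xiAux V₀ ζ n fun k =>
            if h : k ∈ Finset.range (n + 1) then p ⟨k, h⟩ else p ⟨0, h0mem⟩
        let Ψ : ((i : ({n + 1} : Finset ℕ)) → Ω₁) → Ω₁ :=
          fun p => p ⟨n + 1, Finset.mem_singleton_self _⟩
        have hΦmeas : Measurable Φ := by
          apply (measurable_xiAux hV₀ hζmeas n).comp
          apply measurable_pi_lambda
          intro k
          by_cases h : k ∈ Finset.range (n + 1)
          · simp only [dif_pos h]; exact measurable_pi_apply _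
          · simp only [dif_neg h]; exact measurable_pi_apply _
        have hΨmeas : Measurable Ψ := measurable_pi_apply _
        have hIF2 := hIF.comp hΦmeas hΨmeas
        have e1 : (Φ ∘ fun a (i : (Finset.range (n + 1) : Finset ℕ)) => coords i a)
            = fun ω => ξs ω n := by
          funext ω
          show xiAux V₀ ζ n _ = ξs ω n
          rw [hxi ω n]
          exact xiAux_congr V₀ ζ n fun j hj =>
            dif_pos (Finset.mem_range.mpr (Nat.lt_succ_of_le hj))
        have e2 : (Ψ ∘ fun a (i : ({n + 1} : Finset ℕ)) => coords i a) = coords (n + 1) := rfl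
        rw [e1, e2] at hIF2
        exact hIF2
      have hjoint : P.map (fun ω => (ξs ω n, coords (n + 1) ω)) = σm.prod P₁ := by
        rw [← ih, ← hcoordslaw (n + 1)]
        exact (indepFun_iff_map_prod_eq_prod_map_map (hξmeas n).aemeasurable
          (hcoords (n + 1)).aemeasurable).mp hindep2
      have hΛmeas : Measurable (fun p : (ℕ → E) × Ω₁ => (p.1, ζ p.1 p.2)) :=
        measurable_fst.prodMk hζmeas
      have hmeaspair : Measurable (fun ω => (ξs ω n, coords (n + 1) ω)) :=
        (hξmeas n).prodMk (hcoords (n + 1))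
      have hpairLHS : P.map (fun ω => (ξs ω n, ζ (ξs ω n) (coords (n + 1) ω)))
          = (σm.prod P₁).map (fun p : (ℕ → E) × Ω₁ => (p.1, ζ p.1 p.2)) := by
        rw [← hjoint, Measure.map_map hΛmeas hmeaspair]
        rfl
      -- rectangles for the left pair law
      have hLrect : ∀ B : Set (ℕ → E), MeasurableSet B → ∀ A : Set E, MeasurableSet A →
          ((σm.prod P₁).map (fun p : (ℕ → E) × Ω₁ => (p.1, ζ p.1 p.2))) (B ×ˢ A)
            = ∫⁻ ξp in B, P₁ {ω₁ | ζ ξp ω₁ ∈ A} ∂σm := by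
        intro B hB A hA
        rw [Measure.map_apply hΛmeas (hB.prod hA)]
        have hset : (fun p : (ℕ → E) × Ω₁ => (p.1, ζ p.1 p.2)) ⁻¹' (B ×ˢ A)
            = {p : (ℕ → E) × Ω₁ | p.1 ∈ B ∧ ζ p.1 p.2 ∈ A} := rfl
        have hsetm : MeasurableSet {p : (ℕ → E) × Ω₁ | p.1 ∈ B ∧ ζ p.1 p.2 ∈ A} :=
          (measurable_fst hB).inter (hζmeas hA)
        rw [hset, Measure.prod_apply hsetm]
        have hind : ∀ ξp : ℕ → E,
            P₁ (Prod.mk ξp ⁻¹' {p : (ℕ → E) × Ω₁ | p.1 ∈ B ∧ ζ p.1 p.2 ∈ A})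
              = B.indicator (fun ξp => P₁ {ω₁ | ζ ξp ω₁ ∈ A}) ξp := by
          intro ξp
          by_cases hξ : ξp ∈ B
          · rw [indicator_of_mem hξ]
            congr 1
            ext ω₁; simp [hξ]
          · rw [indicator_of_notMem hξ]
            have he : Prod.mk ξp ⁻¹' {p : (ℕ → E) × Ω₁ | p.1 ∈ B ∧ ζ p.1 p.2 ∈ A} = ∅ := by
              ext ω₁; simp [hξ]
            rw [he]; exact measure_empty
        rw [lintegral_congr hind, lintegral_indicator hB]
      -- rectangles for `ν`
      have hνrect : ∀ B : Set (ℕ → E), MeasurableSet B → ∀ A : Set E, MeasurableSet A →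
          ν (B ×ˢ A) = ∫⁻ ξp in B, P₁ {ω₁ | ζ ξp ω₁ ∈ A} ∂σm := by
        intro B hB A hA
        have hgmeas : Measurable (fun ξp => P₁ {ω₁ | ζ ξp ω₁ ∈ A}) :=
          measurable_measure_prodMk_left (hζmeas hA)
        have h1 : ν (B ×ˢ A) = P₀ {ω | (fun m : ℕ => η (-(m : ℤ)) ω) ∈ B ∧ η 1 ω ∈ A} := by
          rw [hν, Measure.map_apply (hpast0.prodMk (hmeas 1)) (hB.prod hA)]
          rfl
        rw [h1, hcond A hA B hB]
        have haemem : ∀ᵐ ω ∂P₀, (fun m : ℕ => η (-(m : ℤ)) ω) ∈ msupport σm := by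
          have hc : P₀ ((fun ω => fun m : ℕ => η (-(m : ℤ)) ω) ⁻¹' (msupport σm)ᶜ) = 0 := by
            rw [← Measure.map_apply hpast0 (isClosed_msupport σm).measurableSet.compl, ← hσm]
            exact msupport_compl_null σm
          rw [ae_iff]; exact hc
        have hQg : ∀ᵐ ω ∂P₀, Q (fun m : ℕ => η (-(m : ℤ)) ω) A
            = P₁ {ω₁ | ζ (fun m : ℕ => η (-(m : ℤ)) ω) ω₁ ∈ A} := by
          filter_upwards [haemem] with ω hω
          have hζm : Measurable (ζ (fun m : ℕ => η (-(m : ℤ)) ω)) :=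
            hζmeas.comp (measurable_const.prodMk measurable_id)
          rw [← hζlaw _ hω, Measure.map_apply hζm hA]
          rfl
        have hBset : MeasurableSet {ω : Ω₀ | (fun m : ℕ => η (-(m : ℤ)) ω) ∈ B} := hpast0 hB
        rw [setLIntegral_congr_fun_ae hBset (hQg.mono fun ω h _ => h)]
        have hfin := setLIntegral_map (μ := P₀) hB hgmeas hpast0
        rw [← hσm] at hfin
        exact hfin.symm
      -- the pair laws agree
      haveI : IsProbabilityMeasure ((σm.prod P₁).map
          (fun p : (ℕ → E) × Ω₁ => (p.1, ζ p.1 p.2))) :=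
        Measure.isProbabilityMeasure_map hΛmeas.aemeasurable
      have hpairs : P.map (fun ω => (ξs ω n, ζ (ξs ω n) (coords (n + 1) ω))) = ν := by
        rw [hpairLHS]
        exact measure_prod_ext fun B hB A hA => by
          rw [hLrect B hB A hA, ← hνrect B hB A hA]
      -- conclude
      have hcomp : (fun ω => ξs ω (n + 1))
          = (fun p : (ℕ → E) × E => seqAppend p.1 p.2)
            ∘ (fun ω => (ξs ω n, ζ (ξs ω n) (coords (n + 1) ω))) :=
        funext fun ω => hξrec ω n
      have hmeaspair2 : Measurable (fun ω => (ξs ω n, ζ (ξs ω n) (coords (n + 1) ω))) :=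
        (hξmeas n).prodMk (hζmeas.comp ((hξmeas n).prodMk (hcoords (n + 1))))
      rw [hcomp, ← Measure.map_map measurable_seqAppend hmeaspair2, hpairs]
      have hpastcomp : (fun ω₀ => fun m : ℕ => η (((n + 1 : ℕ) : ℤ) - m) ω₀)
          = (fun p : (ℕ → E) × E => seqAppend p.1 p.2)
            ∘ (fun ω₀ => ((fun m : ℕ => η ((n : ℤ) - m) ω₀), η ((n : ℤ) + 1) ω₀)) := by
        funext ω₀ m
        cases m with
        | zero =>
          have e : ((n + 1 : ℕ) : ℤ) - ((0 : ℕ) : ℤ) = (n : ℤ) + 1 := by push_cast; ring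
          show η (((n + 1 : ℕ) : ℤ) - ((0 : ℕ) : ℤ)) ω₀ = η ((n : ℤ) + 1) ω₀
          rw [e]
        | succ m =>
          have e : ((n + 1 : ℕ) : ℤ) - ((m + 1 : ℕ) : ℤ) = (n : ℤ) - m := by push_cast; ring
          show η (((n + 1 : ℕ) : ℤ) - ((m + 1 : ℕ) : ℤ)) ω₀ = η ((n : ℤ) - m) ω₀
          rw [e]
      calc ν.map (fun p : (ℕ → E) × E => seqAppend p.1 p.2)
          = (P₀.map (fun ω₀ => ((fun m : ℕ => η ((n : ℤ) - m) ω₀), η ((n : ℤ) + 1) ω₀))).map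
              (fun p : (ℕ → E) × E => seqAppend p.1 p.2) := by rw [hpairlaw n]
        _ = P₀.map (fun ω₀ => fun m : ℕ => η (((n + 1 : ℕ) : ℤ) - m) ω₀) := by
            rw [Measure.map_map measurable_seqAppend (hpairn n), ← hpastcomp]
        _ = σm := hpastlaw (n + 1)
  -- a.s., `v` is the deterministic trajectory driven by the appended noises
  have hB : ∀ n : ℕ, ∀ᵐ ω ∂P, ∀ i, i ≤ n →
      v ω i = traj S u (fun j => ξs ω n (n - j)) i := by
    intro n
    induction n with
    | zero =>
      filter_upwards [hv0ae] with ω hω i hi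
      have h0 : i = 0 := Nat.le_zero.mp hi
      subst h0
      exact hω
    | succ n ih =>
      filter_upwards [ih] with ω hω i hi
      have hagree : ∀ j, 1 ≤ j → j ≤ n → ξs ω n (n - j) = ξs ω (n + 1) (n + 1 - j) := by
        intro j h1 h2
        have he : n + 1 - j = (n - j) + 1 := by omega
        rw [he, hξrec ω n]
        rfl
      have hkey : ∀ i, i ≤ n → v ω i = traj S u (fun j => ξs ω (n + 1) (n + 1 - j)) i := by
        intro i hi'
        rw [hω i hi']
        exact traj_congr S u i fun j h1 h2 => hagree j h1 (h2.trans hi')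
      by_cases hle : i ≤ n
      · exact hkey i hle
      · have hieq : i = n + 1 := by omega
        subst hieq
        have hz : ξs ω (n + 1) (n + 1 - (n + 1)) = ζ (ξs ω n) (coords (n + 1) ω) := by
          have h0 : n + 1 - (n + 1) = 0 := by omega
          rw [h0, hξrec ω n]
          rfl
        have htr : traj S u (fun j => ξs ω (n + 1) (n + 1 - j)) (n + 1)
            = S (traj S u (fun j => ξs ω (n + 1) (n + 1 - j)) n,
                ξs ω (n + 1) (n + 1 - (n + 1))) := rfl
        rw [htr, hz, ← hkey n le_rfl, hvrec ω n]
  -- conclusion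
  intro n
  have hGmmeas : Measurable (fun ξp : ℕ → E => fun i : Fin (n + 1) =>
      traj S u (fun j => ξp (n - j)) (i : ℕ)) :=
    measurable_pi_lambda _ fun i =>
      (measurable_traj hSm u (i : ℕ)).comp
        (measurable_pi_lambda _ fun j => measurable_pi_apply (n - j))
  have hLae : (fun ω => fun i : Fin (n + 1) => v ω i)
      =ᵐ[P] (fun ξp : ℕ → E => fun i : Fin (n + 1) =>
        traj S u (fun j => ξp (n - j)) (i : ℕ)) ∘ (fun ω => ξs ω n) := by
    filter_upwards [hB n] with ω hω
    funext i
    exact hω i (Nat.lt_succ_iff.mp i.isLt)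
  have hR : (fun ξp : ℕ → E => fun i : Fin (n + 1) =>
        traj S u (fun j => ξp (n - j)) (i : ℕ))
        ∘ (fun ω₀ => fun m : ℕ => η ((n : ℤ) - m) ω₀)
      = fun ω₀ => fun i : Fin (n + 1) => traj S u (fun j => η (j : ℤ) ω₀) i := by
    funext ω₀ i
    show traj S u (fun j => η ((n : ℤ) - ((n - j : ℕ) : ℤ)) ω₀) (i : ℕ)
        = traj S u (fun j => η (j : ℤ) ω₀) (i : ℕ)
    refine traj_congr S u (i : ℕ) fun j h1 h2 => ?_
    have hjn : j ≤ n := h2.trans (Nat.lt_succ_iff.mp i.isLt)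
    congr 1
    omega
  calc P.map (fun ω => fun i : Fin (n + 1) => v ω i)
      = P.map ((fun ξp : ℕ → E => fun i : Fin (n + 1) =>
          traj S u (fun j => ξp (n - j)) (i : ℕ)) ∘ (fun ω => ξs ω n)) :=
        Measure.map_congr hLae
    _ = (P.map (fun ω => ξs ω n)).map (fun ξp : ℕ → E => fun i : Fin (n + 1) =>
          traj S u (fun j => ξp (n - j)) (i : ℕ)) :=
        (Measure.map_map hGmmeas (hξmeas n)).symm
    _ = (P₀.map (fun ω₀ => fun m : ℕ => η ((n : ℤ) - m) ω₀)).map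
          (fun ξp : ℕ → E => fun i : Fin (n + 1) =>
            traj S u (fun j => ξp (n - j)) (i : ℕ)) := by
        rw [hA n, hpastlaw n]
    _ = P₀.map ((fun ξp : ℕ → E => fun i : Fin (n + 1) =>
          traj S u (fun j => ξp (n - j)) (i : ℕ))
            ∘ (fun ω₀ => fun m : ℕ => η ((n : ℤ) - m) ω₀)) :=
        Measure.map_map hGmmeas (hpast n)
    _ = P₀.map (fun ω₀ => fun i : Fin (n + 1) =>
          traj S u (fun j => η (j : ℤ) ω₀) i) := by rw [hR]
end
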